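/- arXiv:2104.14745 — 6 statements merged into one kernel-verified Lean document; each statement's English description precedes it below -/
import Mathlib

section
/- Let d ≥ 2 with d dividing r and r ≥ 2. Suppose A is a mixed orthogonal array MOA(r, N, d₁^{n₁}d₂^{n₂}⋯d_l^{n_l}, 2) and B is a difference scheme D(r, r, d). Let C = [A ⊕ 0_d, B ⊕ (d)] be the dr × (N + r) array whose row indexed by a pair (i, g) ∈ {1,…,r} × ℤ_d is the concatenation of row i of A with the vector (B(i,1)+g, …, B(i,r)+g). Then C is a mixed orthogonal array MOA(dr, N + r, d₁^{n₁}d₂^{n₂}⋯d_l^{n_l}d^r, 2), and MD(C) = min{r, MD(A) + r − r/d}. -/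
/-!
Two rows `(i, g)` and `(i, g')` of `C` agree on the `A`-part and differ in every `B`-column.
For `i ≠ i'` they differ in `d_H(A_i, A_i')` columns of the `A`-part and in those `B`-columns `j`
with `B i j - B i' j ≠ g' - g`, i.e. in `r - r/d` of them, because the transpose of a square
difference scheme is again a difference scheme. The latter holds because for a nontrivial
character `ψ` of `ℤ_d` the matrix `M = (ψ (B a b))` satisfies `Mᴴ M = r I` by the column
condition, hence `M Mᴴ = r I`, and orthogonality of the rows of `M` for all `ψ ≠ 1` is the row
condition by Fourier inversion. Strength 2 is a direct count: for fixed `i`, one `B`-column fixes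
the shift `g`, and two `B`-columns are handled by the difference scheme condition.
-/

open Finset

/-- The Hamming distance between two rows of an array: the number of columns
in which the rows differ. -/
def hamDist {ι κ : Type*} [Fintype κ] (A : ι → κ → ℕ) (i i' : ι) : ℕ :=
  (Finset.univ.filter fun j => A i j ≠ A i' j).card

/-- `MD(A)`: the minimum Hamming distance over all pairs of distinct rows. -/
noncomputable def minDist {ι κ : Type*} [Fintype κ] (A : ι → κ → ℕ) : ℕ :=
  sInf {n | ∃ i i', i ≠ i' ∧ hamDist A i i' = n}

/-- `A` is a mixed orthogonal array of strength `k` (rows indexed by `ι`,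
columns by `κ`, column `j` taking values in `{0, …, lv j − 1}`): in the
subarray given by any choice of at most `k` columns, every tuple of symbols
occurs equally often as a row, namely (number of rows)/(product of the levels
of the chosen columns) times. -/
def IsMOA {ι κ : Type*} [Fintype ι] [Fintype κ] [DecidableEq κ]
    (A : ι → κ → ℕ) (lv : κ → ℕ) (k : ℕ) : Prop :=
  (∀ i j, A i j < lv j) ∧
  ∀ S : Finset κ, S.card ≤ k → ∀ x : κ → ℕ, (∀ j ∈ S, x j < lv j) →
    (Finset.univ.filter fun i : ι => ∀ j ∈ S, A i j = x j).card * ∏ j ∈ S, lv j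
      = Fintype.card ι

/-- An irredundant mixed orthogonal array of strength `k`: an MOA of strength
`k` any two distinct rows of which have Hamming distance at least `k+1`. -/
def IsIrMOA {ι κ : Type*} [Fintype ι] [Fintype κ] [DecidableEq κ]
    (A : ι → κ → ℕ) (lv : κ → ℕ) (k : ℕ) : Prop :=
  IsMOA A lv k ∧ ∀ i i' : ι, i ≠ i' → k + 1 ≤ hamDist A i i'

/-- A difference scheme `D(r, c, d)`: an `r × c` matrix over `ℤ_d` such that
for any two distinct columns the `r` differences of corresponding entries
take each value of `ℤ_d` exactly `r/d` times. -/
def IsDiffScheme {r c d : ℕ} (B : Fin r → Fin c → ZMod d) : Prop :=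
  ∀ j j' : Fin c, j ≠ j' → ∀ g : ZMod d,
    (Finset.univ.filter fun i : Fin r => B i j - B i j' = g).card * d = r

open scoped Matrix

namespace AddChar

variable {G ι : Type*} [AddCommGroup G] [Fintype G]

lemma mul_star_apply (ψ : AddChar G ℂ) (x y : G) : ψ x * star (ψ y) = ψ (x - y) := by
  rw [Complex.star_def, ← map_neg_eq_conj, ← map_add_eq_mul, sub_eq_add_neg]

variable [DecidableEq G] [Fintype ι]

lemma sum_comp_eq_zero_of_card_fiber {v : ι → G}
    (hv : ∀ g, #{j | v j = g} * Fintype.card G = Fintype.card ι)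
    {ψ : AddChar G ℂ} (hψ : ψ ≠ 1) : ∑ j, ψ (v j) = 0 := by
  have hfiber : ∀ g, #{j | v j = g} = #{j | v j = 0} := fun g =>
    Nat.eq_of_mul_eq_mul_right Fintype.card_pos ((hv g).trans (hv 0).symm)
  calc ∑ j, ψ (v j) = ∑ g, ∑ j with v j = g, ψ (v j) := (sum_fiberwise _ _ _).symm
    _ = ∑ g, #{j | v j = 0} • ψ g := by
        refine sum_congr rfl fun g _ => ?_
        rw [sum_congr rfl fun j hj => by rw [(mem_filter.1 hj).2], sum_const, hfiber]
    _ = 0 := by rw [← smul_sum, sum_eq_zero_of_ne_one hψ, smul_zero]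

lemma card_fiber_mul_card_eq {v : ι → G} (hv : ∀ ψ : AddChar G ℂ, ψ ≠ 1 → ∑ j, ψ (v j) = 0)
    (g : G) : #{j | v j = g} * Fintype.card G = Fintype.card ι := by
  have hdual : ∑ ψ : AddChar G ℂ, ∑ j, ψ (v j - g) = Fintype.card ι := by
    rw [Fintype.sum_eq_single 1 fun ψ hψ => ?_]
    · simp
    · simp_rw [map_sub_eq_div, div_eq_mul_inv, ← sum_mul, hv ψ hψ, zero_mul]
  have hfourier : ∑ ψ : AddChar G ℂ, ∑ j, ψ (v j - g) = #{j | v j = g} * Fintype.card G := by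
    rw [sum_comm]
    simp_rw [sum_apply_eq_ite, sub_eq_zero, sum_ite, sum_const_zero, add_zero, sum_const,
      nsmul_eq_mul]
  exact_mod_cast hfourier.symm.trans hdual

lemma sum_row_sub_eq_zero [DecidableEq ι] {B : ι → ι → G}
    (hB : ∀ j j', j ≠ j' → ∀ g, #{a | B a j - B a j' = g} * Fintype.card G = Fintype.card ι)
    {ψ : AddChar G ℂ} (hψ : ψ ≠ 1) {i i' : ι} (hii : i ≠ i') :
    ∑ j, ψ (B i j - B i' j) = 0 := by
  have : Nonempty ι := ⟨i⟩
  let M : Matrix ι ι ℂ := Matrix.of fun a b => ψ (B a b)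
  have hcols : Mᴴ * M = (Fintype.card ι : ℂ) • 1 := by
    ext j j'
    simp only [Matrix.mul_apply, Matrix.conjTranspose_apply, M, Matrix.of_apply,
      mul_comm (star _), mul_star_apply]
    obtain rfl | hjj := eq_or_ne j j'
    · simp
    · simp [hjj, sum_comp_eq_zero_of_card_fiber (hB j' j hjj.symm) hψ]
  have hcard : (Fintype.card ι : ℂ) ≠ 0 := Nat.cast_ne_zero.2 Fintype.card_ne_zero
  have hrows : M * Mᴴ = (Fintype.card ι : ℂ) • 1 := by
    have h : ((Fintype.card ι : ℂ)⁻¹ • Mᴴ) * M = 1 := by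
      rw [Matrix.smul_mul, hcols, smul_smul, inv_mul_cancel₀ hcard, one_smul]
    rw [← one_smul ℂ (M * Mᴴ), ← mul_inv_cancel₀ hcard, mul_smul, ← Matrix.mul_smul,
      mul_eq_one_comm.1 h]
  simpa only [Matrix.mul_apply, Matrix.conjTranspose_apply, M, Matrix.of_apply, mul_star_apply,
    Matrix.smul_apply, Matrix.one_apply_ne hii, smul_zero] using congr_fun (congr_fun hrows i) i'

end AddChar

theorem IsDiffScheme.transpose {r d : ℕ} [NeZero d] {B : Fin r → Fin r → ZMod d}
    (hB : IsDiffScheme B) : IsDiffScheme fun j i => B i j := by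
  intro i i' hii g
  have hcols : ∀ j j', j ≠ j' → ∀ g,
      #{a | B a j - B a j' = g} * Fintype.card (ZMod d) = Fintype.card (Fin r) := by
    simpa only [ZMod.card, Fintype.card_fin] using fun j j' h g => hB j j' h g
  simpa only [ZMod.card, Fintype.card_fin] using
    AddChar.card_fiber_mul_card_eq (fun ψ hψ => AddChar.sum_row_sub_eq_zero hcols hψ hii) g

section IsMOA

variable {ι κ : Type*} [Fintype ι] [Fintype κ] [DecidableEq κ] {A : ι → κ → ℕ} {lv : κ → ℕ}
  {k : ℕ}

lemma IsMOA.card_filter_mul (hA : IsMOA A lv k) (hk : 1 ≤ k) {j : κ} {x : ℕ} (hx : x < lv j) :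
    #{i | A i j = x} * lv j = Fintype.card ι := by
  simpa using hA.2 {j} (by simpa using hk) (fun _ => x) (by simpa using hx)

lemma IsMOA.card_filter_and_mul (hA : IsMOA A lv k) (hk : 2 ≤ k) {j j' : κ} (hjj : j ≠ j')
    {x y : ℕ} (hx : x < lv j) (hy : y < lv j') :
    #{i | A i j = x ∧ A i j' = y} * (lv j * lv j') = Fintype.card ι := by
  have := hA.2 {j, j'} ((card_pair hjj).trans_le hk) (Function.update (fun _ => y) j x)
    (by simp [hjj.symm, hx, hy])
  simpa [hjj, hjj.symm, prod_pair hjj] using this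

lemma isMOA_two_of_card_filter (hlt : ∀ i j, A i j < lv j)
    (h₁ : ∀ j x, x < lv j → #{i | A i j = x} * lv j = Fintype.card ι)
    (h₂ : ∀ j j', j ≠ j' → ∀ x y, x < lv j → y < lv j' →
      #{i | A i j = x ∧ A i j' = y} * (lv j * lv j') = Fintype.card ι) :
    IsMOA A lv 2 := by
  refine ⟨hlt, fun S hS x hx => ?_⟩
  obtain h | h | h : #S = 0 ∨ #S = 1 ∨ #S = 2 := by omega
  · simp [card_eq_zero.1 h]
  · obtain ⟨j, rfl⟩ := card_eq_one.1 h
    simpa using h₁ j (x j) (hx j (mem_singleton_self j))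
  · obtain ⟨j, j', hjj, rfl⟩ := card_eq_two.1 h
    simpa [prod_pair hjj] using h₂ j j' hjj (x j) (x j') (hx j (by simp)) (hx j' (by simp))

end IsMOA

section MinDist

variable {ι κ : Type*} [Fintype κ] {A : ι → κ → ℕ}

lemma minDist_le_hamDist {i i' : ι} (h : i ≠ i') : minDist A ≤ hamDist A i i' :=
  Nat.sInf_le ⟨i, i', h, rfl⟩

lemma exists_hamDist_eq_minDist [Nontrivial ι] :
    ∃ i i', i ≠ i' ∧ hamDist A i i' = minDist A := by
  obtain ⟨i, i', h⟩ := exists_pair_ne ι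
  exact Nat.sInf_mem (s := {n | ∃ i i', i ≠ i' ∧ hamDist A i i' = n}) ⟨_, i, i', h, rfl⟩

lemma le_minDist [Nontrivial ι] {n : ℕ} (h : ∀ i i', i ≠ i' → n ≤ hamDist A i i') :
    n ≤ minDist A := by
  obtain ⟨i, i', hii, hmin⟩ := exists_hamDist_eq_minDist (A := A)
  exact hmin ▸ h i i' hii

end MinDist

lemma hamDist_sumElim {ι κ κ' : Type*} [Fintype κ] [Fintype κ'] (X : ι → κ → ℕ)
    (Y : ι → κ' → ℕ) (i i' : ι) :
    hamDist (fun p => Sum.elim (X p) (Y p)) i i' = hamDist X i i' + hamDist Y i i' := by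
  simp only [hamDist, card_filter, Fintype.sum_sum_type]
  rfl

lemma ZMod.val_eq_iff_eq_natCast {d x : ℕ} [NeZero d] (hx : x < d) {z : ZMod d} :
    z.val = x ↔ z = x :=
  ⟨fun h => h ▸ (ZMod.natCast_zmod_val z).symm, fun h => h ▸ ZMod.val_natCast_of_lt hx⟩

section CardFilterProd

variable {ι G : Type*} [Fintype ι] [Fintype G]

lemma card_filter_prod_fst (P : ι → Prop) [DecidablePred P] :
    #{p : ι × G | P p.1} = #{i | P i} * Fintype.card G := by
  rw [← univ_product_univ, filter_product_left, card_product, card_univ]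

lemma card_filter_prod_add_eq [AddGroup G] [DecidableEq G] (u : ι → G) (c : G)
    (P : ι → G → Prop) [∀ i g, Decidable (P i g)] :
    #{p : ι × G | u p.1 + p.2 = c ∧ P p.1 p.2} = #{i | P i (-u i + c)} := by
  refine card_nbij' Prod.fst (fun i => (i, -u i + c)) ?_ ?_ ?_ fun _ _ => rfl
  · rintro ⟨i, g⟩ hp
    obtain ⟨rfl, hP⟩ : g = -u i + c ∧ P i g := by
      simpa [eq_neg_add_iff_add_eq] using hp
    simpa using hP
  · intro i hi
    simpa using hi
  · rintro ⟨i, g⟩ hp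
    simp only [coe_filter, Set.mem_ofPred_eq, mem_univ, true_and] at hp
    simp [← hp.1]

end CardFilterProd

/-- The array `[A ⊕ 0_d, B ⊕ (d)]`: row `(i, g)` is row `i` of `A` followed by row `i` of `B`
shifted by `g`. -/
def juxtaposeShifts {ι κ κ' : Type*} {d : ℕ} (A : ι → κ → ℕ) (B : ι → κ' → ZMod d) :
    ι × ZMod d → κ ⊕ κ' → ℕ :=
  fun p => Sum.elim (fun j => A p.1 j) (fun j => (B p.1 j + p.2).val)

section JuxtaposeShifts

variable {r c d : ℕ} [NeZero d] {κ : Type*} {A : Fin r → κ → ℕ} {B : Fin r → Fin c → ZMod d}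

lemma card_filter_juxtaposeShifts_inl (a : κ) (x : ℕ) :
    #{p | juxtaposeShifts A B p (.inl a) = x} = #{i | A i a = x} * d :=
  (card_filter_prod_fst (G := ZMod d) fun i => A i a = x).trans (by rw [ZMod.card])

lemma card_filter_juxtaposeShifts_inr (b : Fin c) {y : ℕ} (hy : y < d) :
    #{p | juxtaposeShifts A B p (.inr b) = y} = r := by
  simp only [juxtaposeShifts, Sum.elim_inr, ZMod.val_eq_iff_eq_natCast hy]
  simpa using card_filter_prod_add_eq (fun i => B i b) (y : ZMod d) fun _ _ => True

lemma card_filter_juxtaposeShifts_inl_inl (a a' : κ) (x y : ℕ) :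
    #{p | juxtaposeShifts A B p (.inl a) = x ∧ juxtaposeShifts A B p (.inl a') = y} =
      #{i | A i a = x ∧ A i a' = y} * d :=
  (card_filter_prod_fst (G := ZMod d) fun i => A i a = x ∧ A i a' = y).trans (by rw [ZMod.card])

lemma card_filter_juxtaposeShifts_inl_inr (a : κ) (b : Fin c) (x : ℕ) {y : ℕ} (hy : y < d) :
    #{p | juxtaposeShifts A B p (.inl a) = x ∧ juxtaposeShifts A B p (.inr b) = y} =
      #{i | A i a = x} := by
  simp only [juxtaposeShifts, Sum.elim_inl, Sum.elim_inr, ZMod.val_eq_iff_eq_natCast hy,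
    and_comm (a := A _ a = x)]
  exact card_filter_prod_add_eq (fun i => B i b) (y : ZMod d) fun i _ => A i a = x

lemma card_filter_juxtaposeShifts_inr_inr (b b' : Fin c) {x y : ℕ} (hx : x < d) (hy : y < d) :
    #{p | juxtaposeShifts A B p (.inr b) = x ∧ juxtaposeShifts A B p (.inr b') = y} =
      #{i | B i b - B i b' = x - y} := by
  simp only [juxtaposeShifts, Sum.elim_inr, ZMod.val_eq_iff_eq_natCast hx,
    ZMod.val_eq_iff_eq_natCast hy]
  refine (card_filter_prod_add_eq (fun i => B i b) (x : ZMod d)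
    fun i g => B i b' + g = y).trans (congrArg card (filter_congr fun i _ => ?_))
  constructor <;> intro h <;> linear_combination -h

theorem isMOA_juxtaposeShifts [Fintype κ] [DecidableEq κ] {lv : κ → ℕ} (hA : IsMOA A lv 2)
    (hB : IsDiffScheme B) : IsMOA (juxtaposeShifts A B) (Sum.elim lv fun _ => d) 2 := by
  have hcard : Fintype.card (Fin r × ZMod d) = r * d := by simp
  have hA₁ {a x} (hx : x < lv a) := (hA.card_filter_mul one_le_two hx).trans (Fintype.card_fin r)
  refine isMOA_two_of_card_filter ?_ ?_ ?_
  · rintro p (a | b)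
    exacts [hA.1 p.1 a, ZMod.val_lt _]
  · rintro (a | b) x hx <;> simp only [Sum.elim_inl, Sum.elim_inr] at hx ⊢ <;> rw [hcard]
    · rw [card_filter_juxtaposeShifts_inl, mul_right_comm, hA₁ hx]
    · rw [card_filter_juxtaposeShifts_inr b hx]
  · rintro (a | b) (a' | b') hne x y hx hy <;>
      simp only [Sum.elim_inl, Sum.elim_inr, ne_eq, Sum.inl.injEq, Sum.inr.injEq] at hx hy hne ⊢ <;>
      rw [hcard]
    · rw [card_filter_juxtaposeShifts_inl_inl, mul_right_comm,
        hA.card_filter_and_mul le_rfl hne hx hy, Fintype.card_fin]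
    · rw [card_filter_juxtaposeShifts_inl_inr a b' x hy, ← mul_assoc, hA₁ hx]
    · rw [filter_congr fun _ _ => and_comm, card_filter_juxtaposeShifts_inl_inr a' b y hx,
        mul_comm d, ← mul_assoc, hA₁ hy]
    · rw [card_filter_juxtaposeShifts_inr_inr b b' hx hy, ← mul_assoc, hB b b' hne]

lemma hamDist_juxtaposeShifts_of_fst_eq [Fintype κ] (i : Fin r) {g g' : ZMod d} (h : g ≠ g') :
    hamDist (juxtaposeShifts A B) (i, g) (i, g') = c := by
  unfold juxtaposeShifts
  rw [hamDist_sumElim]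
  simp [hamDist, (ZMod.val_injective d).eq_iff, h]

lemma hamDist_juxtaposeShifts_of_fst_ne [Fintype κ] (hB : IsDiffScheme fun j i => B i j)
    {i i' : Fin r} (h : i ≠ i') (g g' : ZMod d) :
    hamDist (juxtaposeShifts A B) (i, g) (i', g') = hamDist A i i' + (c - c / d) := by
  have hfiber : #{j | B i j - B i' j = g' - g} = c / d :=
    (Nat.div_eq_of_eq_mul_left (NeZero.pos d) (hB i i' h (g' - g)).symm).symm
  have hshift : ∀ j, (B i j + g).val = (B i' j + g').val ↔ B i j - B i' j = g' - g := by
    intro j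
    rw [(ZMod.val_injective d).eq_iff]
    constructor <;> intro hj <;> linear_combination hj
  unfold juxtaposeShifts
  rw [hamDist_sumElim]
  congr 1
  have hsplit := card_filter_add_card_filter_not (s := univ) fun j => B i j - B i' j = g' - g
  rw [card_univ, Fintype.card_fin, hfiber] at hsplit
  rw [hamDist, filter_congr fun j _ => not_congr (hshift j)]
  omega

theorem minDist_juxtaposeShifts [Fintype κ] (hd : 2 ≤ d) (hr : 2 ≤ r)
    (hB : IsDiffScheme fun j i => B i j) :
    minDist (juxtaposeShifts A B) = min c (minDist A + c - c / d) := by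
  have : Nontrivial (Fin r) := Fin.nontrivial_iff_two_le.2 hr
  have : Fact (1 < d) := ⟨hd⟩
  rw [Nat.add_sub_assoc (Nat.div_le_self c d)]
  refine le_antisymm (le_min ?_ ?_) (le_minDist ?_)
  · obtain ⟨i⟩ := ‹Nontrivial (Fin r)›.to_nonempty
    exact (minDist_le_hamDist (i := (i, 0)) (i' := (i, 1)) (by simp)).trans_eq
      (hamDist_juxtaposeShifts_of_fst_eq i zero_ne_one)
  · obtain ⟨i, i', hii, hmin⟩ := exists_hamDist_eq_minDist (A := A)
    rw [← hmin, ← hamDist_juxtaposeShifts_of_fst_ne hB hii 0 0]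
    exact minDist_le_hamDist (by simp [hii])
  · rintro ⟨i, g⟩ ⟨i', g'⟩ hne
    obtain rfl | hii := eq_or_ne i i'
    · rw [hamDist_juxtaposeShifts_of_fst_eq i (by simpa using hne)]
      exact min_le_left _ _
    · rw [hamDist_juxtaposeShifts_of_fst_ne hB hii]
      exact (min_le_right _ _).trans (Nat.add_le_add_right (minDist_le_hamDist hii) _)

end JuxtaposeShifts

theorem statement0_general {r N d : ℕ} [NeZero d] {lv : Fin N → ℕ}
    (hd : 2 ≤ d) (hr : 2 ≤ r)
    (A : Fin r → Fin N → ℕ) (hA : IsMOA A lv 2)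
    (B : Fin r → Fin r → ZMod d) (hB : IsDiffScheme B) :
    IsMOA
      (fun p : Fin r × ZMod d =>
        Sum.elim (fun j : Fin N => A p.1 j) (fun j : Fin r => (B p.1 j + p.2).val))
      (Sum.elim lv fun _ : Fin r => d) 2 ∧
    minDist
      (fun p : Fin r × ZMod d =>
        Sum.elim (fun j : Fin N => A p.1 j) (fun j : Fin r => (B p.1 j + p.2).val))
      = min r (minDist A + r - r / d) :=
  ⟨isMOA_juxtaposeShifts hA hB, minDist_juxtaposeShifts hd hr hB.transpose⟩

/-- If `A` is an `MOA(r, N, d₁^{n₁}⋯d_l^{n_l}, 2)` and `B` is a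
difference scheme `D(r, r, d)` (with `2 ≤ d ∣ r`, `r ≥ 2`), then the juxtaposed
array `C = [A ⊕ 0_d, B ⊕ (d)]`, with rows indexed by `(i, g) ∈ Fin r × ℤ_d`,
is an `MOA(dr, N + r, d₁^{n₁}⋯d_l^{n_l}d^r, 2)` and
`MD(C) = min {r, MD(A) + r − r/d}`. -/
theorem statement0 {r N d : ℕ} [NeZero d] {lv : Fin N → ℕ}
    (hd : 2 ≤ d) (hdr : d ∣ r) (hr : 2 ≤ r)
    (A : Fin r → Fin N → ℕ) (hA : IsMOA A lv 2)
    (B : Fin r → Fin r → ZMod d) (hB : IsDiffScheme B) :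
    IsMOA
      (fun p : Fin r × ZMod d =>
        Sum.elim (fun j : Fin N => A p.1 j) (fun j : Fin r => (B p.1 j + p.2).val))
      (Sum.elim lv fun _ : Fin r => d) 2 ∧
    minDist
      (fun p : Fin r × ZMod d =>
        Sum.elim (fun j : Fin N => A p.1 j) (fun j : Fin r => (B p.1 j + p.2).val))
      = min r (minDist A + r - r / d) :=
  statement0_general hd hr A hA B hB
end

section
/- Let A be a mixed orthogonal array MOA(r, N, d₁^{n₁}d₂^{n₂}⋯d_l^{n_l}, k) with MD(A) = w ≥ k + 1. Then for every N′ with N − w + k + 1 ≤ N′ ≤ N, every subarray of A obtained by deleting any N − N′ of its columns is an irredundant mixed orthogonal array of strength k on N′ columns, i.e. an IrMOA(r, N′, d₁^{x₁}d₂^{x₂}⋯d_l^{x_l}, k) for the corresponding exponents 0 ≤ x_i ≤ n_i with x₁+⋯+x_l = N′. -/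
open Finset

/-- If `A` is an `MOA(r, N, d₁^{n₁}⋯d_l^{n_l}, k)` with
`MD(A) = w ≥ k + 1`, then for every `N′` with `N − w + k + 1 ≤ N′ ≤ N`, the
subarray on any set `S` of `N′` columns (i.e. obtained by deleting `N − N′`
columns) is an irredundant MOA of strength `k` (with the inherited levels). -/
theorem statement1 {r N k w : ℕ} {lv : Fin N → ℕ}
    (A : Fin r → Fin N → ℕ) (hA : IsMOA A lv k)
    (hw : minDist A = w) (hkw : k + 1 ≤ w)
    (N' : ℕ) (hN'l : N - w + k + 1 ≤ N') (hN'u : N' ≤ N)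
    (S : Finset (Fin N)) (hS : S.card = N') :
    IsIrMOA (fun i (j : S) => A i j.1) (fun j : S => lv j.1) k := by
  classical
  obtain ⟨hlt, hmoa⟩ := hA
  constructor
  · refine ⟨fun i j => hlt i j.1, ?_⟩
    intro T hT x hx
    set T' : Finset (Fin N) := T.map (Function.Embedding.subtype _) with hT'
    set x' : Fin N → ℕ := fun j => if h : j ∈ S then x ⟨j, h⟩ else 0 with hx'
    have hfe : ∀ i : Fin r, (∀ j ∈ T, A i j.1 = x j) ↔ (∀ j ∈ T', A i j = x' j) := by
      intro i
      constructor
      · intro h j hj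
        simp only [hT', Finset.mem_map, Function.Embedding.coe_subtype] at hj
        obtain ⟨a, ha, rfl⟩ := hj
        simp only [hx', a.2, dif_pos]
        simpa using h a ha
      · intro h j hj
        have hj' : (j : Fin N) ∈ T' := by
          simp only [hT', Finset.mem_map, Function.Embedding.coe_subtype]
          exact ⟨j, hj, rfl⟩
        have := h j.1 hj'
        simpa [hx', j.2] using this
    have hcard : T'.card ≤ k := by rw [Finset.card_map]; exact hT
    have hx'' : ∀ j ∈ T', x' j < lv j := by
      intro j hj
      simp only [hT', Finset.mem_map, Function.Embedding.coe_subtype] at hj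
      obtain ⟨a, ha, rfl⟩ := hj
      simp only [hx', a.2, dif_pos]
      simpa using hx a ha
    have hprod : ∏ j ∈ T', lv j = ∏ j ∈ T, lv j.1 := by
      rw [hT', Finset.prod_map]; rfl
    have := hmoa T' hcard x' hx''
    rw [hprod] at this
    rw [← this]
    congr 1
    · congr 1
      ext i
      simp only [Finset.mem_filter, Finset.mem_univ, true_and]
      exact hfe i
  · intro i i' hne
    have hwle : w ≤ hamDist A i i' := by
      rw [← hw]
      exact Nat.sInf_le ⟨i, i', hne, rfl⟩
    set D : Fin N → Prop := fun j => A i j ≠ A i' j with hD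
    have hcardS : hamDist (fun i (j : S) => A i j.1) i i' = (S.filter D).card := by
      unfold hamDist
      apply Finset.card_bij (fun (j : S) _ => j.1)
      · intro a ha
        simp only [Finset.mem_filter, Finset.mem_univ, true_and] at ha
        simp only [Finset.mem_filter]
        exact ⟨a.2, ha⟩
      · intro a _ b _ hab
        exact Subtype.ext hab
      · intro b hb
        simp only [Finset.mem_filter] at hb
        exact ⟨⟨b, hb.1⟩, by simpa using hb.2, rfl⟩
    have hsub : (Finset.univ.filter D) ⊆ (S.filter D) ∪ Sᶜ := by
      intro j hj
      simp only [Finset.mem_filter, Finset.mem_univ, true_and] at hj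
      by_cases h : j ∈ S
      · exact Finset.mem_union_left _ (Finset.mem_filter.mpr ⟨h, hj⟩)
      · exact Finset.mem_union_right _ (Finset.mem_compl.mpr h)
    have hle : hamDist A i i' ≤ (S.filter D).card + (N - N') := by
      have h1 : hamDist A i i' ≤ ((S.filter D) ∪ Sᶜ).card := Finset.card_le_card hsub
      have h2 : ((S.filter D) ∪ Sᶜ).card ≤ (S.filter D).card + Sᶜ.card :=
        Finset.card_union_le _ _
      have h3 : Sᶜ.card = N - N' := by
        rw [Finset.card_compl, hS]; simp
      omega
    have hNle : hamDist A i i' ≤ N := by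
      have := Finset.card_filter_le (Finset.univ : Finset (Fin N))
        (fun j => A i j ≠ A i' j)
      simpa [hamDist] using this
    rw [hcardS]
    omega
end

section
/- (Expansive replacement method.) Let A be a mixed orthogonal array of strength k with r rows and N columns whose first column takes values in an alphabet of size d₁, and let B be a mixed orthogonal array of strength k with exactly d₁ rows and N_B columns of alphabet sizes f₁,…,f_{N_B}. Fix a bijection between the d₁ symbols of the first column of A and the rows of B, and let C be the r × (N − 1 + N_B) array obtained from A by replacing each entry of its first column by the corresponding row of B. Then C is a mixed orthogonal array of strength k, namely an MOA(r, N−1+N_B, f₁¹⋯f_{N_B}¹d₂¹⋯d_N¹, k). -/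
/-! Split the chosen columns of the new array into a set `S₁` of columns of `B` and a set `S₂`
of columns of `A`. If `S₁` is empty, the count is one of `A`'s. Otherwise `#S₂ < k`, so `A` has
strength at least `#S₂ + 1` on its first column together with `S₂`: every symbol `a < d₁` appears
with a prescribed tuple on `S₂` in `r / (d₁ ∏ lv)` rows. A row of the new array matches on `S₁`
iff its first entry of `A` indexes a row of `B` matching on `S₁`, and `B` has `d₁ / ∏_{S₁} lvB`
such rows; summing over them gives `r / (∏_{S₁} lvB ∏_{S₂} lv)`. -/

open Finset

theorem Finset.forall_mem_disjSum_iff {α β : Type*} {S₁ : Finset α} {S₂ : Finset β}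
    {p : α ⊕ β → Prop} :
    (∀ j ∈ S₁.disjSum S₂, p j) ↔ (∀ j ∈ S₁, p (.inl j)) ∧ ∀ j ∈ S₂, p (.inr j) := by
  simp only [Sum.forall, inl_mem_disjSum, inr_mem_disjSum]

section SumColumns

variable {ι α β : Type*} [Fintype ι] [Fintype α] [Fintype β] [DecidableEq α] [DecidableEq β]

theorem isMOA_sum_iff (A : ι → α ⊕ β → ℕ) (lv : α ⊕ β → ℕ) (k : ℕ) :
    IsMOA A lv k ↔ (∀ i j, A i j < lv j) ∧
      ∀ (S₁ : Finset α) (S₂ : Finset β), #S₁ + #S₂ ≤ k → ∀ (x₁ : α → ℕ) (x₂ : β → ℕ),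
        (∀ j ∈ S₁, x₁ j < lv (.inl j)) → (∀ j ∈ S₂, x₂ j < lv (.inr j)) →
        #{i | (∀ j ∈ S₁, A i (.inl j) = x₁ j) ∧ ∀ j ∈ S₂, A i (.inr j) = x₂ j} *
          ((∏ j ∈ S₁, lv (.inl j)) * ∏ j ∈ S₂, lv (.inr j)) = Fintype.card ι := by
  have count_disjSum (S₁ : Finset α) (S₂ : Finset β) (x : α ⊕ β → ℕ) :
      #{i | ∀ j ∈ S₁.disjSum S₂, A i j = x j} * ∏ j ∈ S₁.disjSum S₂, lv j =
        #{i | (∀ j ∈ S₁, A i (.inl j) = x (.inl j)) ∧ ∀ j ∈ S₂, A i (.inr j) = x (.inr j)} *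
          ((∏ j ∈ S₁, lv (.inl j)) * ∏ j ∈ S₂, lv (.inr j)) := by
    simp only [forall_mem_disjSum_iff, prod_disjSum]
  refine and_congr_right fun _ => ⟨fun h S₁ S₂ hk x₁ x₂ hx₁ hx₂ => ?_, fun h S hk x hx => ?_⟩
  · exact (count_disjSum S₁ S₂ (Sum.elim x₁ x₂)).symm.trans <|
      h (S₁.disjSum S₂) (by rwa [card_disjSum]) (Sum.elim x₁ x₂)
        (forall_mem_disjSum_iff.2 ⟨hx₁, hx₂⟩)
  · rw [← S.toLeft_disjSum_toRight] at hk hx ⊢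
    rw [count_disjSum]
    exact h _ _ (by rwa [card_disjSum] at hk) _ _ (forall_mem_disjSum_iff.1 hx).1
      (forall_mem_disjSum_iff.1 hx).2

end SumColumns

section FirstColumn

variable {ι κ : Type*} [Fintype ι] [Fintype κ] [DecidableEq κ] {d k : ℕ}
  {A : ι → Unit ⊕ κ → ℕ} {lv : κ → ℕ}

theorem IsMOA.card_fiber_mul (hA : IsMOA A (Sum.elim (fun _ => d) lv) k) {a : ℕ} (ha : a < d)
    (S : Finset κ) (hk : #S + 1 ≤ k) (x : κ → ℕ) (hx : ∀ j ∈ S, x j < lv j) :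
    #{i | A i (.inl ()) = a ∧ ∀ j ∈ S, A i (.inr j) = x j} * (d * ∏ j ∈ S, lv j) =
      Fintype.card ι := by
  simpa [Unique.forall_iff] using ((isMOA_sum_iff _ _ _).1 hA).2 univ S
    (by simpa [add_comm] using hk) (fun _ => a) x (by simpa using ha) hx

theorem IsMOA.card_filter_fst_mul (hA : IsMOA A (Sum.elim (fun _ => d) lv) k)
    (P : ℕ → Prop) [DecidablePred P]
    (S : Finset κ) (hk : #S + 1 ≤ k) (x : κ → ℕ) (hx : ∀ j ∈ S, x j < lv j) :
    #{i | P (A i (.inl ())) ∧ ∀ j ∈ S, A i (.inr j) = x j} * (d * ∏ j ∈ S, lv j) =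
      #{a : Fin d | P a} * Fintype.card ι := by
  have hmaps : ∀ i ∈ ({i | P (A i (.inl ())) ∧ ∀ j ∈ S, A i (.inr j) = x j} : Finset ι),
      A i (.inl ()) ∈ ({a : Fin d | P a} : Finset (Fin d)).map Fin.valEmbedding := by
    intro i hi
    simp only [mem_filter, mem_univ, true_and] at hi
    exact mem_map.2 ⟨⟨_, hA.1 i (.inl ())⟩, by simpa using hi.1, rfl⟩
  calc _ = ∑ _a ∈ ({a : Fin d | P a} : Finset (Fin d)), Fintype.card ι := by
        rw [card_eq_sum_card_fiberwise hmaps, sum_mul, sum_map]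
        refine sum_congr rfl fun a ha => ?_
        rw [← hA.card_fiber_mul a.isLt S hk x hx, filter_filter]
        congr 2
        ext i
        simp only [mem_filter, mem_univ, true_and] at ha
        simp only [mem_filter, mem_univ, true_and, Fin.valEmbedding_apply]
        constructor
        · rintro ⟨⟨-, hS⟩, hfst⟩
          exact ⟨hfst, hS⟩
        · rintro ⟨hfst, hS⟩
          exact ⟨⟨hfst ▸ ha, hS⟩, hfst⟩
    _ = _ := by rw [sum_const, smul_eq_mul]

theorem IsMOA.card_filter_replace_mul {κB : Type*} [Fintype κB] [DecidableEq κB]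
    (hA : IsMOA A (Sum.elim (fun _ => d) lv) k) {B : ℕ → κB → ℕ} {lvB : κB → ℕ}
    (hB : IsMOA (fun a : Fin d => B a) lvB k) {S₁ : Finset κB} (hS₁ : S₁.Nonempty)
    {S₂ : Finset κ} (hk : #S₁ + #S₂ ≤ k) {x₁ : κB → ℕ} {x₂ : κ → ℕ}
    (hx₁ : ∀ j ∈ S₁, x₁ j < lvB j) (hx₂ : ∀ j ∈ S₂, x₂ j < lv j) :
    #{i | (∀ j ∈ S₁, B (A i (.inl ())) j = x₁ j) ∧ ∀ j ∈ S₂, A i (.inr j) = x₂ j} *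
      ((∏ j ∈ S₁, lvB j) * ∏ j ∈ S₂, lv j) = Fintype.card ι := by
  obtain _ | ⟨⟨i₀⟩⟩ := isEmpty_or_nonempty ι
  · simp
  have hd : 0 < d := Nat.zero_lt_of_lt (hA.1 i₀ (.inl ()))
  have hsymbols : #{a : Fin d | ∀ j ∈ S₁, B a j = x₁ j} * ∏ j ∈ S₁, lvB j = d := by
    simpa using hB.2 S₁ (by omega) x₁ hx₁
  have hrows := hA.card_filter_fst_mul (fun a => ∀ j ∈ S₁, B a j = x₁ j) S₂
    (by have := hS₁.card_pos; omega) x₂ hx₂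
  apply Nat.eq_of_mul_eq_mul_left hd
  set n := #{i | (∀ j ∈ S₁, B (A i (.inl ())) j = x₁ j) ∧ ∀ j ∈ S₂, A i (.inr j) = x₂ j}
  calc d * (n * ((∏ j ∈ S₁, lvB j) * ∏ j ∈ S₂, lv j))
      = n * (d * ∏ j ∈ S₂, lv j) * ∏ j ∈ S₁, lvB j := by ring
    _ = d * Fintype.card ι := by rw [hrows, mul_right_comm, hsymbols]

end FirstColumn

/-- **expansive replacement method.** Let `A` be an MOA of
strength `k` whose columns are `Unit ⊕ Fin N₀` (the distinguished first column
having `d₁` levels, the remaining `N₀` columns having levels `lv₀`), and let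
`B` be an MOA of strength `k` with `d₁` rows and `N_B` columns of levels
`lvB`. Replacing each entry of the first column of `A` by the corresponding
row of `B` yields an MOA of strength `k` on `N_B + N₀` columns, of level type
`f₁¹⋯f_{N_B}¹d₂¹⋯d_N¹`. -/
theorem statement3 {r N₀ NB d₁ k : ℕ}
    (A : Fin r → (Unit ⊕ Fin N₀) → ℕ) (lv₀ : Fin N₀ → ℕ)
    (hA : IsMOA A (Sum.elim (fun _ => d₁) lv₀) k)
    (B : ℕ → Fin NB → ℕ) (lvB : Fin NB → ℕ)
    (hB : IsMOA (fun a : Fin d₁ => B a.val) lvB k) :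
    IsMOA
      (fun i : Fin r =>
        Sum.elim (fun jb : Fin NB => B (A i (Sum.inl ())) jb)
          (fun j : Fin N₀ => A i (Sum.inr j)))
      (Sum.elim lvB lv₀) k := by
  refine (isMOA_sum_iff _ _ _).2 ⟨?_, fun S₁ S₂ hk x₁ x₂ hx₁ hx₂ => ?_⟩
  · rintro i (j | j)
    · exact hB.1 ⟨_, hA.1 i (.inl ())⟩ j
    · exact hA.1 i (.inr j)
  obtain rfl | hS₁ := S₁.eq_empty_or_nonempty
  · simpa using ((isMOA_sum_iff _ _ _).1 hA).2 ∅ S₂ (by simpa using hk) 0 x₂ (by simp) hx₂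
  · exact hA.card_filter_replace_mul hB hS₁ hk hx₁ hx₂
end

section
/- For every integer n ≥ 16 there exist positive integers r₁ and r₂, an irredundant mixed orthogonal array IrMOA(r₁, 5+n, 3⁵2^n, 3), and an irredundant mixed orthogonal array IrMOA(r₂, 4+n, 3⁴2^n, 3). -/
open Finset

/-!
Rows are pairs `(a, z)` with `a ∈ 𝔽₃ᵐ` (`m = 4` or `3`) and `z ∈ 𝔽₂^(K+1)`. The `m + 1` ternary
columns carry the parity-extended word `(a, ∑ aᵢ)`: any `m` of its coordinates are free, and
distinct words differ in at least two places. The `n` binary columns carry the values at `n`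
distinct points `xᵢ ∈ 𝔽₂ᴷ` of the affine function encoded by `z`, shifted by the unit vector at
position `col a`. Three distinct points of `𝔽₂ᴷ` are affinely independent, so for each `a` the
binary part has strength 3, hence so has the whole array; the points are chosen to meet every
affine hyperplane at least four times, so distinct `z` give binary words at distance `≥ 4`.
Finally `col` is a 15-colouring of `𝔽₃ᵐ` giving different colours to `a ≠ b` whose ternary words
are at distance `≤ 3`. Such rows then differ in two ternary places and, since their shifts differ
in exactly two places while binary code words have weight `0` or `≥ 4`, in two binary places.
-/

open Function Matrix

theorem AddMonoidHom.card_fiber_mul_card_of_surjective {G H : Type*} [AddGroup G] [Fintype G]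
    [AddGroup H] [Fintype H] [DecidableEq H] {f : G →+ H} (hf : Surjective f) (y : H) :
    #{g | f g = y} * Fintype.card H = Fintype.card G := by
  calc #{g | f g = y} * Fintype.card H = ∑ y' : H, #{g | f g = y'} := by
        rw [sum_congr rfl fun y' _ => card_fiber_eq_of_mem_range f (hf y') (hf y), sum_const,
          card_univ, smul_eq_mul, mul_comm]
    _ = Fintype.card G := (card_eq_sum_card_fiberwise fun g _ => mem_univ (f g)).symm

theorem ZMod.val_eq_iff_eq_natCast_s9 {q a : ℕ} [NeZero q] {v : ZMod q} (ha : a < q) :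
    v.val = a ↔ v = a :=
  ⟨fun h => h ▸ (natCast_zmod_val v).symm, fun h => h ▸ val_natCast_of_lt ha⟩

theorem Matrix.mulVec_surjective_of_linearIndependent {K m n : Type*} [Field K] [Fintype m]
    [Fintype n] {M : Matrix m n K} (h : LinearIndependent K M.row) : Surjective M.mulVec := by
  have hrange : LinearMap.range M.mulVecLin = ⊤ := Submodule.eq_top_of_finrank_eq <| by
    rw [← Matrix.rank, h.rank_matrix, Module.finrank_fintype_fun_eq_card]
  exact LinearMap.range_eq_top.mp hrange

theorem card_filter_prod_and {α β : Type*} [Fintype α] [Fintype β] (P : α → Prop)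
    (Q : α → β → Prop) [DecidablePred P] [∀ a, DecidablePred (Q a)] :
    #{p : α × β | P p.1 ∧ Q p.1 p.2} = ∑ a ∈ {a | P a}, #{b | Q a b} := by
  simp only [card_filter, sum_filter, Fintype.sum_prod_type, ite_and, sum_ite_irrel]
  simp

section MOA

variable {ι κ : Type*} [Fintype ι] [Fintype κ] [DecidableEq κ]

theorem isMOA_affine {G : Type*} [AddCommGroup G] [Fintype G] {q k : ℕ} [NeZero q]
    (f : G →+ κ → ZMod q) (hf : ∀ S : Finset κ, #S ≤ k → Surjective fun g (j : S) => f g j)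
    (o : κ → ZMod q) : IsMOA (fun g j => (f g j + o j).val) (fun _ => q) k := by
  refine ⟨fun g j => ZMod.val_lt _, fun S hS x hx => ?_⟩
  let F : G →+ (S → ZMod q) := AddMonoidHom.mk' (fun g j => f g j) fun a b => by ext; simp
  have hfilter : #{g | ∀ j ∈ S, (f g j + o j).val = x j} =
      #{g | F g = fun j : S => (x j : ZMod q) - o j} := by
    congr 1
    ext g
    simp only [mem_filter, mem_univ, true_and, funext_iff, Subtype.forall, F,
      AddMonoidHom.mk'_apply, eq_sub_iff_add_eq]
    exact forall₂_congr fun j hj => ZMod.val_eq_iff_eq_natCast_s9 (hx j hj)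
  rw [hfilter, prod_const, ← (F.card_fiber_mul_card_of_surjective (hf S hS) _),
    Fintype.card_fun, ZMod.card, Fintype.card_coe]

theorem IsMOA.sumElim_prod {ι₂ κ₂ : Type*} [Fintype ι₂] [Fintype κ₂] [DecidableEq κ₂]
    {A₁ : ι → κ → ℕ} {lv₁ : κ → ℕ} {A₂ : ι → ι₂ → κ₂ → ℕ} {lv₂ : κ₂ → ℕ} {k : ℕ}
    (h₁ : IsMOA A₁ lv₁ k) (h₂ : ∀ i, IsMOA (A₂ i) lv₂ k) :
    IsMOA (fun p : ι × ι₂ => Sum.elim (A₁ p.1) (A₂ p.1 p.2)) (Sum.elim lv₁ lv₂) k := by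
  refine ⟨fun p c => c.rec (h₁.1 p.1) ((h₂ p.1).1 p.2), fun S hS x hx => ?_⟩
  have hcard := S.card_toLeft_add_card_toRight
  have hcount₁ := h₁.2 S.toLeft (by omega) (x ∘ Sum.inl) fun j hj => hx _ (mem_toLeft.mp hj)
  have hcount₂ i := (h₂ i).2 S.toRight (by omega) (x ∘ Sum.inr) fun j hj => hx _ (mem_toRight.mp hj)
  simp only [Function.comp_apply] at hcount₁ hcount₂
  have hsplit : ∀ p : ι × ι₂, (∀ c ∈ S, Sum.elim (A₁ p.1) (A₂ p.1 p.2) c = x c) ↔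
      (∀ j ∈ S.toLeft, A₁ p.1 j = x (.inl j)) ∧ ∀ j ∈ S.toRight, A₂ p.1 p.2 j = x (.inr j) := by
    simp [Sum.forall, mem_toLeft, mem_toRight]
  rw [filter_congr fun p _ => hsplit p,
    card_filter_prod_and (fun i => ∀ j ∈ S.toLeft, A₁ i j = x (.inl j))
      (fun i i₂ => ∀ j ∈ S.toRight, A₂ i i₂ j = x (.inr j)),
    prod_sum_eq_prod_toLeft_mul_prod_toRight, Fintype.card_prod]
  simp only [Sum.elim_inl, Sum.elim_inr]
  rw [← hcount₁, mul_comm (∏ j ∈ S.toLeft, _), ← mul_assoc, sum_mul,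
    sum_congr rfl fun i _ => hcount₂ i, sum_const, smul_eq_mul, mul_right_comm]

end MOA

theorem IsIrMOA.comp_equiv {ι ι' κ : Type*} [Fintype ι] [Fintype ι'] [Fintype κ] [DecidableEq κ]
    {A : ι → κ → ℕ} {lv : κ → ℕ} {k : ℕ} (h : IsIrMOA A lv k) (e : ι' ≃ ι) :
    IsIrMOA (A ∘ e) lv k := by
  refine ⟨⟨fun i j => h.1.1 _ _, fun S hS x hx => ?_⟩,
    fun i i' hii' => h.2 _ _ (e.injective.ne hii')⟩
  rw [Fintype.card_congr e, ← h.1.2 S hS x hx, ← Fintype.card_subtype, ← Fintype.card_subtype]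
  exact congrArg (· * _) (Fintype.card_congr (e.subtypeEquiv fun _ => Iff.rfl))

section Hamming

variable {κ κ' R : Type*} [Fintype κ] [Fintype κ'] [DecidableEq R]

theorem hamDist_eq_hammingDist {ι : Type*} (A : ι → κ → ℕ) (i i' : ι) :
    hamDist A i i' = hammingDist (A i) (A i') := rfl

theorem hammingDist_sumElim (u u' : κ → R) (v v' : κ' → R) :
    hammingDist (Sum.elim u v) (Sum.elim u' v') = hammingDist u u' + hammingDist v v' := by
  simp only [hammingDist, card_filter, Fintype.sum_sum_type, Sum.elim_inl, Sum.elim_inr]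
  rfl

theorem hammingDist_le_hammingDist_add_add [AddGroup R] (u u' v v' : κ → R) :
    hammingDist u u' ≤ hammingDist (u + v) (u' + v') + hammingDist v v' := by
  classical
  refine (card_le_card fun i => ?_).trans (card_union_le _ _)
  simp only [mem_filter, mem_union, mem_univ, true_and, Pi.add_apply]
  contrapose!
  rintro ⟨hsum, hv⟩
  rwa [hv, add_left_inj] at hsum

theorem hammingDist_single_single [DecidableEq κ] [Zero R] {i j : κ} (hij : i ≠ j) {r : R}
    (hr : r ≠ 0) : hammingDist (Pi.single i r : κ → R) (Pi.single j r) = 2 := by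
  rw [hammingDist, card_eq_two]
  refine ⟨i, j, hij, ?_⟩
  ext l
  rcases eq_or_ne l i with rfl | hli
  · simp [hij, hr]
  · rcases eq_or_ne l j with rfl | hlj
    · simp [hli, hr.symm]
    · simp [hli, hlj]

theorem AddMonoidHom.hammingDist_map {G : Type*} [AddGroup G] [AddGroup R] (f : G →+ κ → R)
    (a b : G) : hammingDist (f a) (f b) = hammingNorm (f (-a + b)) := by
  rw [hammingDist_eq_hammingNorm, map_add, map_neg]

end Hamming

section Juxtapose

variable {G₁ G₂ κ₁ κ₂ : Type*} [AddCommGroup G₁] [AddCommGroup G₂] {p q : ℕ}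

def juxtapose (T : G₁ →+ κ₁ → ZMod p) (B : G₂ →+ κ₂ → ZMod q) (o : G₁ → κ₂ → ZMod q)
    (g : G₁ × G₂) : κ₁ ⊕ κ₂ → ℕ :=
  Sum.elim (fun j => (T g.1 j).val) fun i => (B g.2 i + o g.1 i).val

variable [Fintype κ₁] [Fintype κ₂] [NeZero p] [NeZero q] {T : G₁ →+ κ₁ → ZMod p}
  {B : G₂ →+ κ₂ → ZMod q}

theorem hamDist_juxtapose (o : G₁ → κ₂ → ZMod q) (g g' : G₁ × G₂) :
    hamDist (juxtapose T B o) g g' =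
      hammingDist (T g.1) (T g'.1) + hammingDist (B g.2 + o g.1) (B g'.2 + o g'.1) := by
  rw [hamDist_eq_hammingDist, juxtapose, juxtapose, hammingDist_sumElim,
    hammingDist_comp (fun _ => ZMod.val) (x := T g.1) fun _ => ZMod.val_injective p]
  exact congrArg _ (hammingDist_comp (fun _ => ZMod.val) fun _ => ZMod.val_injective q)

variable [Fintype G₁] [Fintype G₂] [DecidableEq κ₁] [DecidableEq κ₂]

theorem isMOA_juxtapose {k : ℕ}
    (hT : ∀ S : Finset κ₁, #S ≤ k → Surjective fun a (j : S) => T a j)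
    (hB : ∀ S : Finset κ₂, #S ≤ k → Surjective fun z (i : S) => B z i) (o : G₁ → κ₂ → ZMod q) :
    IsMOA (juxtapose T B o) (Sum.elim (fun _ => p) fun _ => q) k := by
  have hT' : IsMOA (fun a j => (T a j).val) (fun _ => p) k := by simpa using isMOA_affine T hT 0
  exact hT'.sumElim_prod fun a => isMOA_affine B hB (o a)

theorem isIrMOA_juxtapose
    (hT : ∀ S : Finset κ₁, #S ≤ 3 → Surjective fun a (j : S) => T a j)
    (hB : ∀ S : Finset κ₂, #S ≤ 3 → Surjective fun z (i : S) => B z i)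
    (hT2 : ∀ a ≠ 0, 2 ≤ hammingNorm (T a)) (hB4 : ∀ z ≠ 0, 4 ≤ hammingNorm (B z))
    {o : G₁ → κ₂ → ZMod q}
    (ho : ∀ a b, a ≠ b → hammingDist (T a) (T b) < 4 → hammingDist (o a) (o b) = 2) :
    IsIrMOA (juxtapose T B o) (Sum.elim (fun _ => p) fun _ => q) 3 := by
  refine ⟨isMOA_juxtapose hT hB o, ?_⟩
  rintro ⟨a, z⟩ ⟨b, z'⟩ hne
  rw [hamDist_juxtapose]
  have hBdist : z = z' ∨ 4 ≤ hammingDist (B z) (B z') := by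
    refine (eq_or_ne z z').imp id fun h => ?_
    rw [B.hammingDist_map]
    exact hB4 _ (by rwa [Ne, neg_add_eq_zero])
  have tri₁ := hammingDist_le_hammingDist_add_add (B z) (B z') (o a) (o b)
  have tri₂ := hammingDist_le_hammingDist_add_add (o a) (o b) (B z) (B z')
  rw [add_comm (o a), add_comm (o b)] at tri₂
  dsimp only
  rcases eq_or_ne a b with rfl | hab
  · have h4 := hBdist.resolve_left fun h => hne (h ▸ rfl)
    rw [hammingDist_self, add_zero] at tri₁
    omega
  · by_cases hclose : hammingDist (T a) (T b) < 4
    · have hTdist : 2 ≤ hammingDist (T a) (T b) := by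
        rw [T.hammingDist_map]
        exact hT2 _ (by rwa [Ne, neg_add_eq_zero])
      have := ho a b hab hclose
      rcases hBdist with rfl | h4
      · rw [hammingDist_self] at tri₂
        omega
      · omega
    · omega

end Juxtapose

section SnocSum

variable {R : Type*} [AddCommGroup R] {m : ℕ}

def snocSum : (Fin m → R) →+ (Fin (m + 1) → R) where
  toFun a := Fin.snoc a (∑ i, a i)
  map_zero' := by ext j; induction j using Fin.lastCases <;> simp
  map_add' a b := by
    ext j; induction j using Fin.lastCases <;> simp [sum_add_distrib]

@[simp]
theorem snocSum_castSucc (a : Fin m → R) (i : Fin m) : snocSum a i.castSucc = a i :=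
  Fin.snoc_castSucc (α := fun _ => R) ..

@[simp]
theorem snocSum_last (a : Fin m → R) : snocSum a (Fin.last m) = ∑ i, a i :=
  Fin.snoc_last (α := fun _ => R) ..

theorem snocSum_restrict_surjective (S : Finset (Fin (m + 1))) (hS : #S ≤ m) :
    Surjective fun (a : Fin m → R) (j : S) => snocSum a j := by
  classical
  intro y
  obtain ⟨ℓ, -, hℓ⟩ := exists_mem_notMem_of_card_lt_card (s := S) (t := univ)
    (by rw [card_univ, Fintype.card_fin]; omega)
  set w : Fin (m + 1) → R := fun j => if h : j ∈ S then y ⟨j, h⟩ else 0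
  suffices ∃ a, ∀ j ∈ S, snocSum a j = w j by
    obtain ⟨a, ha⟩ := this
    exact ⟨a, funext fun j => by simp [ha j j.2, w]⟩
  induction ℓ using Fin.lastCases with
  | last =>
    refine ⟨fun i => w i.castSucc, fun j hj => ?_⟩
    induction j using Fin.lastCases with
    | last => exact absurd hj hℓ
    | cast i => simp
  | cast i₀ =>
    refine ⟨fun i => w i.castSucc +
      (Pi.single i₀ (w (Fin.last m) - ∑ i : Fin m, w i.castSucc) : Fin m → R) i, fun j hj => ?_⟩
    induction j using Fin.lastCases with
    | last => simp [sum_add_distrib]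
    | cast i =>
      have : i ≠ i₀ := by rintro rfl; exact hℓ hj
      simp [this]

theorem two_le_hammingNorm_snocSum [DecidableEq R] {a : Fin m → R} (ha : a ≠ 0) :
    2 ≤ hammingNorm (snocSum a) := by
  obtain ⟨i, hi⟩ := Function.ne_iff.mp ha
  rw [hammingNorm, Nat.succ_le_iff, one_lt_card]
  by_cases hsum : ∑ j, a j = 0
  · obtain ⟨j, hji, hj⟩ : ∃ j, j ≠ i ∧ a j ≠ 0 := by
      by_contra! h
      exact hi (by rwa [Fintype.sum_eq_single i h] at hsum)
    exact ⟨i.castSucc, by simpa, j.castSucc, by simpa, by simpa using hji.symm⟩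
  · exact ⟨i.castSucc, by simpa, Fin.last m, by simpa, (Fin.castSucc_lt_last i).ne⟩

end SnocSum

section AffineCode

variable {R ι : Type*} [CommRing R] {K : ℕ}

def affineCode (x : ι → Fin K → R) : (Fin (K + 1) → R) →+ (ι → R) where
  toFun z i := vecCons 1 (x i) ⬝ᵥ z
  map_zero' := by ext; simp
  map_add' z z' := by ext; simp [dotProduct_add]

theorem affineCode_vecCons (x : ι → Fin K → R) (c : R) (w : Fin K → R) (i : ι) :
    affineCode x (vecCons c w) i = c + x i ⬝ᵥ w := by
  simp [affineCode]

theorem linearIndependent_vecCons_one [Fintype ι] (hι : Fintype.card ι ≤ 3)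
    {x : ι → Fin K → ZMod 2} (hx : Injective x) :
    LinearIndependent (ZMod 2) fun i => vecCons (1 : ZMod 2) (x i) := by
  classical
  rw [Fintype.linearIndependent_iff]
  intro g hg i₀
  by_contra hi₀
  set T : Finset ι := {i | g i ≠ 0}
  have hT : ∑ i ∈ T, vecCons (1 : ZMod 2) (x i) = 0 := by
    rw [← hg, sum_filter]
    refine sum_congr rfl fun i _ => ?_
    split_ifs with h
    · rw [(by decide : ∀ c : ZMod 2, c ≠ 0 → c = 1) _ h, one_smul]
    · rw [not_not.mp h, zero_smul]
  have hcard : #T = 2 := by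
    have heven := congrFun hT 0
    simp only [Finset.sum_apply, cons_val_zero, sum_const, nsmul_eq_mul, mul_one, Pi.zero_apply,
      ZMod.natCast_eq_zero_iff] at heven
    have hi₀T : i₀ ∈ T := by simpa [T] using hi₀
    have := card_pos.mpr ⟨i₀, hi₀T⟩
    have := card_le_univ T
    omega
  obtain ⟨i, j, hij, hTij⟩ := card_eq_two.mp hcard
  rw [hTij, sum_pair hij, CharTwo.add_eq_zero] at hT
  exact hij (hx (vecCons_inj.mp hT).2)

theorem affineCode_restrict_surjective {x : ι → Fin K → ZMod 2} (hx : Injective x)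
    (S : Finset ι) (hS : #S ≤ 3) : Surjective fun z (i : S) => affineCode x z i :=
  mulVec_surjective_of_linearIndependent (M := of fun i : S => vecCons 1 (x i))
    (linearIndependent_vecCons_one (by simpa using hS) (hx.comp Subtype.val_injective))

theorem four_le_hammingNorm_affineCode [Fintype ι] [DecidableEq R] [Nontrivial R]
    {x : ι → Fin K → R} (hι : 4 ≤ Fintype.card ι)
    (hx : ∀ w ≠ 0, ∀ b, 4 ≤ #{i | x i ⬝ᵥ w = b}) {z : Fin (K + 1) → R} (hz : z ≠ 0) :
    4 ≤ hammingNorm (affineCode x z) := by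
  obtain ⟨c, w, rfl⟩ : ∃ c w, z = vecCons c w := ⟨_, _, (cons_head_tail z).symm⟩
  rcases eq_or_ne w 0 with rfl | hw
  · have hc : c ≠ 0 := by rintro rfl; exact hz cons_zero_zero
    simpa [hammingNorm, affineCode_vecCons, hc] using hι
  · refine (hx w hw (1 - c)).trans (card_le_card fun i => ?_)
    simp +contextual [affineCode_vecCons]

end AffineCode

theorem card_filter_dotProduct_mul_card {F : Type*} [Field F] [Fintype F] [DecidableEq F] {Q : ℕ}
    {w : Fin Q → F} (hw : w ≠ 0) (b : F) :
    #{y | y ⬝ᵥ w = b} * Fintype.card F = Fintype.card F ^ Q := by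
  obtain ⟨j, hj⟩ := Function.ne_iff.mp hw
  let f : (Fin Q → F) →+ F := AddMonoidHom.mk' (· ⬝ᵥ w) fun u v => add_dotProduct u v w
  have hf : Surjective f := fun c =>
    ⟨Pi.single j (c / w j), by simp [f, single_dotProduct, div_mul_cancel₀ _ hj]⟩
  simpa [f] using f.card_fiber_mul_card_of_surjective hf b

section TwoSlices

variable {Q : ℕ} (A B : Finset (Fin Q → ZMod 2))

def twoSlices : Finset (Fin (Q + 1) → ZMod 2) := A.image (vecCons 1) ∪ B.image (vecCons 0)

theorem card_twoSlices : #(twoSlices A B) = #A + #B := by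
  have hinj (s : ZMod 2) : Injective (vecCons s : (Fin Q → ZMod 2) → _) :=
    fun _ _ h => (vecCons_inj.mp h).2
  rw [twoSlices, card_union_of_disjoint, card_image_of_injective _ (hinj 1),
    card_image_of_injective _ (hinj 0)]
  refine disjoint_left.mpr fun v h₁ h₂ => ?_
  obtain ⟨y, -, rfl⟩ := mem_image.mp h₁
  obtain ⟨y', -, h⟩ := mem_image.mp h₂
  exact zero_ne_one (congrFun h 0)

variable {A B}

theorem card_filter_le_card_filter_twoSlices {C : Finset (Fin Q → ZMod 2)} {s : ZMod 2}
    (hC : C.image (vecCons s) ⊆ twoSlices A B) (P : (Fin (Q + 1) → ZMod 2) → Prop)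
    [DecidablePred P] : #{y ∈ C | P (vecCons s y)} ≤ #{v ∈ twoSlices A B | P v} :=
  card_le_card_of_injOn (vecCons s)
    (fun _ hy => mem_filter.mpr
      ⟨hC (mem_image_of_mem _ (mem_filter.mp hy).1), (mem_filter.mp hy).2⟩)
    fun _ _ _ _ h => (vecCons_inj.mp h).2

-- A hyperplane `v ⬝ᵥ w = b` either is a slice `v 0 = b`, or meets the slice `v 0 = 1` in
-- `2 ^ (Q - 1)` points, all but at most `#Aᶜ` of which belong to `twoSlices A B`.
theorem four_le_card_filter_twoSlices (hA : 2 * (2 ^ Q - #A + 4) ≤ 2 ^ Q) (hA4 : 4 ≤ #A)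
    (hB4 : 4 ≤ #B) {w : Fin (Q + 1) → ZMod 2} (hw : w ≠ 0) (b : ZMod 2) :
    4 ≤ #{v ∈ twoSlices A B | v ⬝ᵥ w = b} := by
  obtain ⟨w₀, w', rfl⟩ : ∃ c w', w = vecCons c w' := ⟨_, _, (cons_head_tail w).symm⟩
  have hA' := card_filter_le_card_filter_twoSlices (A := A) (B := B) (C := A) (s := 1)
    subset_union_left (· ⬝ᵥ vecCons w₀ w' = b)
  have hB' := card_filter_le_card_filter_twoSlices (A := A) (B := B) (C := B) (s := 0)
    subset_union_right (· ⬝ᵥ vecCons w₀ w' = b)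
  simp only [cons_dotProduct_cons, one_mul, zero_mul, zero_add] at hA' hB'
  rcases eq_or_ne w' 0 with rfl | hw'
  · obtain rfl : w₀ = 1 := by
      rcases (by decide : ∀ c : ZMod 2, c = 0 ∨ c = 1) w₀ with rfl | rfl
      · exact absurd cons_zero_zero hw
      · rfl
    rcases (by decide : ∀ c : ZMod 2, c = 0 ∨ c = 1) b with rfl | rfl
    · simp at hB' ⊢
      omega
    · simp at hA' ⊢
      omega
  · have hhalf := card_filter_dotProduct_mul_card hw' (b - w₀)
    have hcover : #{y | y ⬝ᵥ w' = b - w₀} ≤ #{y ∈ A | w₀ + y ⬝ᵥ w' = b} + #Aᶜ := by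
      refine (card_le_card fun y hy => ?_).trans (card_union_le _ _)
      by_cases hyA : y ∈ A <;> simp_all [eq_sub_iff_add_eq, add_comm]
    simp only [card_compl, Fintype.card_fun, Fintype.card_fin, ZMod.card] at hhalf hcover
    omega

end TwoSlices

theorem exists_pointSet {n : ℕ} (hn : 16 ≤ n) : ∃ (K : ℕ) (X : Finset (Fin K → ZMod 2)),
    #X = n ∧ ∀ w ≠ 0, ∀ b, 4 ≤ #{v ∈ X | v ⬝ᵥ w = b} := by
  set Q := Nat.log 2 n
  have hQ₁ : 2 ^ Q ≤ n := Nat.pow_log_le_self 2 (by omega)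
  have hQ₂ : n < 2 * 2 ^ Q := by rw [← pow_succ']; exact Nat.lt_pow_succ_log_self (by norm_num) n
  have hQ₃ : 2 ^ 4 ≤ 2 ^ Q :=
    Nat.pow_le_pow_right (by norm_num) (Nat.le_log_of_pow_le (by norm_num) (by omega))
  have hcard : #(univ : Finset (Fin Q → ZMod 2)) = 2 ^ Q := by simp
  obtain ⟨A, -, hA⟩ := exists_subset_card_eq (s := univ) (n := n - max 4 (n - 2 ^ Q)) (by omega)
  obtain ⟨B, -, hB⟩ := exists_subset_card_eq (s := univ) (n := max 4 (n - 2 ^ Q)) (by omega)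
  refine ⟨Q + 1, twoSlices A B, by rw [card_twoSlices]; omega, fun w hw b => ?_⟩
  exact four_le_card_filter_twoSlices (by omega) (by omega) (by omega) hw b

theorem exists_affineCode {n : ℕ} (hn : 16 ≤ n) : ∃ (K : ℕ) (x : Fin n → Fin K → ZMod 2),
    Injective x ∧ ∀ z ≠ 0, 4 ≤ hammingNorm (affineCode x z) := by
  obtain ⟨K, X, hX, hhyp⟩ := exists_pointSet hn
  let e : Fin n ≃ X := (Fintype.equivFinOfCardEq (by rw [Fintype.card_coe, hX])).symm
  refine ⟨K, fun i => e i, Subtype.val_injective.comp e.injective,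
    fun z hz => four_le_hammingNorm_affineCode (by simp; omega) (fun w hw b => ?_) hz⟩
  refine (hhyp w hw b).trans_eq (card_bij (fun y hy => e.symm ⟨y, (mem_filter.mp hy).1⟩) ?_ ?_ ?_)
  · exact fun y hy => by simpa using (mem_filter.mp hy).2
  · exact fun y₁ _ y₂ _ h => by simpa using e.symm.injective h
  · exact fun i hi => ⟨e i, by simpa using hi, by simp⟩

theorem exists_isIrMOA_of_coloring {m n K : ℕ} (hm : 3 ≤ m) {col : (Fin m → ZMod 3) → Fin n}
    (hcol : ∀ a b, a ≠ b → hammingDist (snocSum a) (snocSum b) < 4 → col a ≠ col b)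
    {x : Fin n → Fin K → ZMod 2} (hx : Injective x)
    (hx4 : ∀ z ≠ 0, 4 ≤ hammingNorm (affineCode x z)) :
    ∃ (r : ℕ) (C : Fin r → (Fin (m + 1) ⊕ Fin n) → ℕ),
      0 < r ∧ IsIrMOA C (Sum.elim (fun _ => 3) fun _ => 2) 3 := by
  have h := isIrMOA_juxtapose (o := fun a => Pi.single (col a) 1)
    (fun S hS => snocSum_restrict_surjective S (hS.trans hm)) (affineCode_restrict_surjective hx)
    (fun _ => two_le_hammingNorm_snocSum) hx4
    fun a b hab hclose => hammingDist_single_single (hcol a b hab hclose) one_ne_zero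
  exact ⟨_, _, Fintype.card_pos, h.comp_equiv (Fintype.equivFin _).symm⟩

def coloringTable : List (Fin 15) := [5, 13, 10, 11, 0, 9, 12, 1, 2, 6, 9, 3, 8, 2, 14, 10, 4, 7, 1,
  8, 0, 7, 5, 4, 3, 6, 11, 8, 4, 14, 2, 10, 7, 6, 9, 3, 0, 7, 5, 4, 3, 6, 1, 14, 8, 9, 2, 13, 12,
  11, 1, 5, 0, 10, 7, 12, 1, 3, 6, 5, 0, 8, 4, 11, 10, 2, 9, 1, 0, 13, 5, 12, 4, 3, 6, 10, 13, 8, 2,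
  7, 9]

def coloring₄ (a : Fin 4 → ZMod 3) : Fin 15 :=
  coloringTable.getD ((a 0).val + 3 * (a 1).val + 9 * (a 2).val + 27 * (a 3).val) 0

-- `a ↦ (a, 0)` preserves the distance between parity-extended words.
def coloring₃ (a : Fin 3 → ZMod 3) : Fin 15 := coloring₄ (Fin.snoc a 0)

theorem coloring₄_ne : ∀ a b : Fin 4 → ZMod 3, a ≠ b →
    hammingDist (snocSum a) (snocSum b) < 4 → coloring₄ a ≠ coloring₄ b := by
  decide +kernel

theorem coloring₃_ne : ∀ a b : Fin 3 → ZMod 3, a ≠ b →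
    hammingDist (snocSum a) (snocSum b) < 4 → coloring₃ a ≠ coloring₃ b := by
  decide +kernel

/-- For every `n ≥ 16` there exist an
`IrMOA(r₁, 5+n, 3⁵2^n, 3)` and an `IrMOA(r₂, 4+n, 3⁴2^n, 3)`. -/
theorem statement9 (n : ℕ) (hn : 16 ≤ n) :
    (∃ (r₁ : ℕ) (C : Fin r₁ → (Fin 5 ⊕ Fin n) → ℕ),
      0 < r₁ ∧ IsIrMOA C (Sum.elim (fun _ => 3) fun _ => 2) 3) ∧
    (∃ (r₂ : ℕ) (C : Fin r₂ → (Fin 4 ⊕ Fin n) → ℕ),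
      0 < r₂ ∧ IsIrMOA C (Sum.elim (fun _ => 3) fun _ => 2) 3) := by
  obtain ⟨K, x, hx, hx4⟩ := exists_affineCode hn
  have hemb : Injective (Fin.castLE (by omega : 15 ≤ n)) := Fin.castLE_injective _
  exact ⟨exists_isIrMOA_of_coloring (by norm_num) (col := Fin.castLE _ ∘ coloring₄)
      (fun a b hab h => hemb.ne (coloring₄_ne a b hab h)) hx hx4,
    exists_isIrMOA_of_coloring le_rfl (col := Fin.castLE _ ∘ coloring₃)
      (fun a b hab h => hemb.ne (coloring₃_ne a b hab h)) hx hx4⟩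
end

section
/- Let k ≥ 1 and 0 ≤ s ≤ N. Suppose A is a mixed orthogonal array MOA(r, N, d₁¹d₂¹⋯d_N¹, k) (one column of each alphabet size d_w, w = 1,…,N) whose subarray consisting of columns s+1,…,N has minimum Hamming distance MD ≥ k+1. For each w = 1,…,N let B_w be a mixed orthogonal array of strength k with d_w rows and m_w columns of alphabet sizes d_{1w},…,d_{m_w w}. Let v_{iw} ∈ {0,1} for 1 ≤ w ≤ s, 1 ≤ i ≤ m_w, and u_w ∈ {0,1} for s+1 ≤ w ≤ N, and assume MD(B_w) ≥ 1 whenever s+1 ≤ w ≤ N and u_w = 1. Form the array C obtained from A as follows: for each w ≤ s, replace each symbol of column w by the corresponding row of B_w restricted to those columns i with v_{iw} = 1 (under a fixed bijection between the d_w symbols and the rows of B_w); for each w ≥ s+1 with u_w = 1, replace each symbol of column w by the full corresponding row of B_w; keep each column w ≥ s+1 with u_w = 0 unchanged. Then C is an irredundant mixed orthogonal array of strength k with r rows and N − s + Σ_{w=s+1}^{N}(m_w − 1)u_w + Σ_{w=1}^{s}Σ_{i=1}^{m_w} v_{iw} columns, of level type d_{s+1}^{1−u_{s+1}}⋯d_N^{1−u_N}·∏_{w=1}^{s}∏_{i=1}^{m_w}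 d_{iw}^{v_{iw}}·∏_{w=s+1}^{N}∏_{i=1}^{m_w} d_{iw}^{u_w}. -/
open Finset

/-- The original column of `A` that a column of the combined array came from. -/
def colW {N : ℕ} {m : Fin N → ℕ} {T : (w : Fin N) → Finset (Fin (m w))} {keep : Fin N → Bool} :
    ((Σ w : Fin N, {c : Fin (m w) // c ∈ T w}) ⊕ {w : Fin N // keep w = true}) → Fin N
  | Sum.inl p => p.1
  | Sum.inr q => q.1

/-- The value of a column of the combined array as a function of the original symbol. -/
def colVal {N : ℕ} {m : Fin N → ℕ} {T : (w : Fin N) → Finset (Fin (m w))} {keep : Fin N → Bool}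
    (B : (w : Fin N) → ℕ → Fin (m w) → ℕ) :
    ((Σ w : Fin N, {c : Fin (m w) // c ∈ T w}) ⊕ {w : Fin N // keep w = true}) → ℕ → ℕ
  | Sum.inl p => fun a => B p.1 a p.2.1
  | Sum.inr _ => fun a => a

/-- Let `A` be an `MOA(r, N, d₁¹⋯d_N¹, k)` whose subarray on
the columns `w` with `s ≤ w` has minimum Hamming distance `≥ k+1`. For each
column `w` let `B w` be an MOA of strength `k` with `dlv w` rows, `m w`
columns and levels `Blv w` (its rows indexed by the symbols `0,…,dlv w − 1`
of column `w`). Each column `w < s` is replaced by the columns `T w` of `B w`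
(the columns `i` with `v_{iw} = 1`); each column `w ≥ s` is either kept
(`keep w = true`, i.e. `u_w = 0`) or replaced by all columns of `B w`
(`keep w = false`, i.e. `u_w = 1`, in which case `MD(B w) ≥ 1` is assumed).
Then the resulting array `C` is an irredundant MOA of strength `k` with
`r` rows and the stated level type. -/
theorem statement11 {r N k s : ℕ} (hk : 1 ≤ k) (hs : s ≤ N)
    (dlv : Fin N → ℕ)
    (A : Fin r → Fin N → ℕ) (hA : IsMOA A dlv k)
    (hsub : k + 1 ≤ minDist (fun i (j : {j : Fin N // s ≤ j.val}) => A i j.1))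
    (m : Fin N → ℕ)
    (B : (w : Fin N) → ℕ → Fin (m w) → ℕ)
    (Blv : (w : Fin N) → Fin (m w) → ℕ)
    (hB : ∀ w, IsMOA (fun a : Fin (dlv w) => B w a.val) (Blv w) k)
    (T : (w : Fin N) → Finset (Fin (m w)))
    (keep : Fin N → Bool)
    (hlow : ∀ w : Fin N, w.val < s → keep w = false)
    (hhigh : ∀ w : Fin N, s ≤ w.val →
      (keep w = true ∧ T w = ∅) ∨ (keep w = false ∧ T w = Finset.univ))
    (hBMD : ∀ w : Fin N, s ≤ w.val → keep w = false →
      1 ≤ minDist (fun a : Fin (dlv w) => B w a.val)) :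
    IsIrMOA
      (fun i : Fin r =>
        Sum.elim
          (fun p : Σ w : Fin N, {c : Fin (m w) // c ∈ T w} => B p.1 (A i p.1) p.2.1)
          (fun w : {w : Fin N // keep w = true} => A i w.1))
      (Sum.elim (fun p => Blv p.1 p.2.1) fun w => dlv w.1) k := by
  classical
  set C : Fin r → ((Σ w : Fin N, {c : Fin (m w) // c ∈ T w}) ⊕ {w : Fin N // keep w = true}) → ℕ :=
    fun i : Fin r =>
      Sum.elim
        (fun p : Σ w : Fin N, {c : Fin (m w) // c ∈ T w} => B p.1 (A i p.1) p.2.1)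
        (fun w : {w : Fin N // keep w = true} => A i w.1) with hCdef
  set lv : ((Σ w : Fin N, {c : Fin (m w) // c ∈ T w}) ⊕ {w : Fin N // keep w = true}) → ℕ :=
    Sum.elim (fun p => Blv p.1 p.2.1) fun w => dlv w.1 with hlvdef
  have hCval : ∀ (i : Fin r) j, C i j = colVal B j (A i (colW j)) := by
    intro i j
    rw [hCdef]
    cases j <;> rfl
  have hlv_inl : ∀ p : Σ w : Fin N, {c : Fin (m w) // c ∈ T w},
      lv (Sum.inl p) = Blv p.1 p.2.1 := by
    intro p; rw [hlvdef]; rfl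
  have hlv_inr : ∀ q : {w : Fin N // keep w = true}, lv (Sum.inr q) = dlv q.1 := by
    intro q; rw [hlvdef]; rfl
  constructor
  · constructor
    · rintro i (p | q)
      · rw [hCval, hlv_inl]
        exact (hB p.1).1 ⟨A i p.1, hA.1 i p.1⟩ p.2.1
      · rw [hCval, hlv_inr]
        exact hA.1 i q.1
    · -- orthogonality
      intro S hSk x hx
      rcases Nat.eq_zero_or_pos r with hr | hr
      · subst hr
        simp
      have dpos : ∀ w, 0 < dlv w :=
        fun w => Nat.lt_of_le_of_lt (Nat.zero_le _) (hA.1 ⟨0, hr⟩ w)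
      set S' : Finset (Fin N) := S.image colW with hS'def
      have hS'k : S'.card ≤ k := le_trans Finset.card_image_le hSk
      set E : Fin N → Finset ℕ :=
        fun w => (Finset.range (dlv w)).filter
          fun a => ∀ j ∈ S, colW j = w → colVal B j a = x j with hE
      have hEprod : ∀ w ∈ S', (E w).card * ∏ j ∈ S.filter (fun j => colW j = w), lv j
          = dlv w := by
        intro w hw
        obtain ⟨j0, hj0S, hj0f⟩ := Finset.mem_image.1 hw
        cases hkt : keep w with
        | true =>
          have hall : ∀ j ∈ S, colW j = w → j = Sum.inr ⟨w, hkt⟩ := by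
            rintro (⟨w', c⟩ | q) hj hfj
            · exfalso
              have hw' : w' = w := hfj
              subst hw'
              rcases Nat.lt_or_ge w'.val s with hlt | hge
              · rw [hlow w' hlt] at hkt
                exact absurd hkt (by simp)
              · rcases hhigh w' hge with ⟨_, hT⟩ | ⟨hkf, _⟩
                · rw [hT] at c
                  exact absurd c.2 (Finset.notMem_empty _)
                · rw [hkf] at hkt
                  exact absurd hkt (by simp)
            · have hq : q.1 = w := hfj
              exact congrArg Sum.inr (Subtype.ext hq)
          have hj0' : (Sum.inr ⟨w, hkt⟩ : (Σ w : Fin N, {c : Fin (m w) // c ∈ T w}) ⊕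
              {w : Fin N // keep w = true}) ∈ S := hall j0 hj0S hj0f ▸ hj0S
          have hfilt : S.filter (fun j => colW j = w) = {Sum.inr ⟨w, hkt⟩} := by
            ext j
            simp only [Finset.mem_filter, Finset.mem_singleton]
            constructor
            · rintro ⟨hj, hfj⟩
              exact hall j hj hfj
            · rintro rfl
              exact ⟨hj0', rfl⟩
          have hEw : E w = {x (Sum.inr ⟨w, hkt⟩)} := by
            simp only [hE]
            ext a
            simp only [Finset.mem_filter, Finset.mem_range, Finset.mem_singleton]
            constructor
            · rintro ⟨-, h⟩
              exact h _ hj0' rfl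
            · rintro rfl
              refine ⟨?_, ?_⟩
              · have hb := hx _ hj0'
                rw [hlv_inr] at hb
                exact hb
              · intro j hj hfj
                rw [hall j hj hfj]
                rfl
          rw [hEw, hfilt, Finset.card_singleton, Finset.prod_singleton, one_mul, hlv_inr]
        | false =>
          set Sc : Finset (Fin (m w)) := Finset.univ.filter
            (fun c => ∃ hc : c ∈ T w, Sum.inl ⟨w, ⟨c, hc⟩⟩ ∈ S) with hScdef
          have hmemSc : ∀ c ∈ Sc, c ∈ T w :=
            fun c hc => ((Finset.mem_filter.1 hc).2).choose
          have hSSc : ∀ c ∈ Sc, ∀ (hcT : c ∈ T w),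
              (Sum.inl ⟨w, ⟨c, hcT⟩⟩ : (Σ w : Fin N, {c : Fin (m w) // c ∈ T w}) ⊕
                {w : Fin N // keep w = true}) ∈ S := by
            intro c hcSc hcT
            obtain ⟨h1, h2⟩ := (Finset.mem_filter.1 hcSc).2
            exact h2
          set xc : Fin (m w) → ℕ :=
            fun c => if hc : c ∈ T w then x (Sum.inl ⟨w, ⟨c, hc⟩⟩) else 0 with hxcdef
          have hmatch : ∀ a : ℕ, (∀ j ∈ S, colW j = w → colVal B j a = x j) ↔
              (∀ c ∈ Sc, B w a c = xc c) := by
            intro a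
            constructor
            · intro h c hcSc
              have hcT : c ∈ T w := hmemSc c hcSc
              have h2 := h _ (hSSc c hcSc hcT) rfl
              simp only [hxcdef]
              rw [dif_pos hcT]
              exact h2
            · rintro h (⟨w', c'⟩ | q) hj hfj
              · have hw' : w' = w := hfj
                subst hw'
                have hc'Sc : c'.1 ∈ Sc := by
                  rw [hScdef]
                  exact Finset.mem_filter.2 ⟨Finset.mem_univ _, ⟨c'.2, hj⟩⟩
                have h2 := h c'.1 hc'Sc
                simp only [hxcdef] at h2
                rw [dif_pos c'.2] at h2
                exact h2
              · exfalso
                have hqw : q.1 = w := hfj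
                have h2 := q.2
                rw [hqw, hkt] at h2
                exact Bool.noConfusion h2
          have hScard : Sc.card ≤ k := by
            refine le_trans ?_ hSk
            rw [← Finset.card_attach (s := Sc)]
            refine Finset.card_le_card_of_injOn
              (fun c => Sum.inl ⟨w, ⟨c.1, hmemSc c.1 c.2⟩⟩) ?_ ?_
            · intro c _
              exact hSSc c.1 c.2 _
            · intro c _ c' _ hcc
              have hv := congrArg (Sum.elim
                (fun p : Σ w : Fin N, {c : Fin (m w) // c ∈ T w} => p.2.1.val)
                (fun _ => 0)) hcc
              exact Subtype.ext (Fin.val_injective hv)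
          have hxcb : ∀ c ∈ Sc, xc c < Blv w c := by
            intro c hc
            have hcT := hmemSc c hc
            have hb := hx _ (hSSc c hc hcT)
            rw [hlv_inl] at hb
            simp only [hxcdef]
            rw [dif_pos hcT]
            exact hb
          have hBS := (hB w).2 Sc hScard xc hxcb
          rw [Fintype.card_fin] at hBS
          have hEcard : (E w).card = (Finset.univ.filter
              fun a : Fin (dlv w) => ∀ c ∈ Sc, B w a.val c = xc c).card := by
            simp only [hE]
            refine Finset.card_bij
              (fun a ha => (⟨a, Finset.mem_range.1 (Finset.mem_filter.1 ha).1⟩ : Fin (dlv w)))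
              ?_ ?_ ?_
            · intro a ha
              refine Finset.mem_filter.2 ⟨Finset.mem_univ _, ?_⟩
              exact (hmatch a).1 (Finset.mem_filter.1 ha).2
            · intro a ha a' ha' hval
              exact congrArg Fin.val hval
            · intro b hb
              refine ⟨b.val, ?_, rfl⟩
              refine Finset.mem_filter.2 ⟨Finset.mem_range.2 b.isLt, ?_⟩
              exact (hmatch b.val).2 (Finset.mem_filter.1 hb).2
          have hprodeq : ∏ c ∈ Sc, Blv w c = ∏ j ∈ S.filter (fun j => colW j = w), lv j := by
            refine Finset.prod_bij
              (fun (c : Fin (m w)) (hc : c ∈ Sc) => Sum.inl ⟨w, ⟨c, hmemSc c hc⟩⟩)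
              ?_ ?_ ?_ ?_
            · intro c hc
              exact Finset.mem_filter.2 ⟨hSSc c hc _, rfl⟩
            · intro c hc c' hc' hcc
              have hv := congrArg (Sum.elim
                (fun p : Σ w : Fin N, {c : Fin (m w) // c ∈ T w} => p.2.1.val)
                (fun _ => 0)) hcc
              exact Fin.val_injective hv
            · rintro (⟨w', c'⟩ | q) hj
              · have hj' := Finset.mem_filter.1 hj
                have hw' : w' = w := hj'.2
                subst hw'
                refine ⟨c'.1, ?_, rfl⟩
                rw [hScdef]
                exact Finset.mem_filter.2 ⟨Finset.mem_univ _, ⟨c'.2, hj'.1⟩⟩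
              · exfalso
                have hj' := Finset.mem_filter.1 hj
                have hqw : q.1 = w := hj'.2
                have h2 := q.2
                rw [hqw, hkt] at h2
                exact Bool.noConfusion h2
            · intro c hc
              rw [hlv_inl]
          rw [hEcard, ← hprodeq]
          convert hBS using 2
          congr 1
          ext a
          simp only [Finset.mem_filter]
      have hfilter : (Finset.univ.filter fun i : Fin r => ∀ j ∈ S, C i j = x j)
          = Finset.univ.filter fun i : Fin r => ∀ w ∈ S', A i w ∈ E w := by
        ext i
        simp only [Finset.mem_filter, Finset.mem_univ, true_and]
        constructor
        · intro h w hw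
          simp only [hE, Finset.mem_filter, Finset.mem_range]
          refine ⟨hA.1 i w, ?_⟩
          intro j hj hfj
          rw [← hfj, ← hCval i j]
          exact h j hj
        · intro h j hj
          have hw := Finset.mem_image_of_mem colW hj
          have h2 := h (colW j) hw
          simp only [hE, Finset.mem_filter, Finset.mem_range] at h2
          rw [hCval i j]
          exact h2.2 j hj rfl
      have hM : (Finset.univ.filter fun i : Fin r => ∀ w ∈ S', A i w ∈ E w).card
            * ∏ w ∈ S', dlv w
          = (∏ w ∈ S', (E w).card) * r := by
        have hmaps : ∀ i ∈ (Finset.univ.filter fun i : Fin r => ∀ w ∈ S', A i w ∈ E w),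
            (fun w (_ : w ∈ S') => A i w) ∈ S'.pi (fun w => E w) := by
          intro i hi
          rw [Finset.mem_pi]
          exact fun w hw => (Finset.mem_filter.1 hi).2 w hw
        rw [Finset.card_eq_sum_card_fiberwise hmaps, Finset.sum_mul]
        have hfib : ∀ y ∈ S'.pi (fun w => E w),
            ((Finset.univ.filter fun i : Fin r => ∀ w ∈ S', A i w ∈ E w).filter
              (fun i => (fun w (_ : w ∈ S') => A i w) = y)).card * ∏ w ∈ S', dlv w = r := by
          intro y hy
          have hy' := Finset.mem_pi.1 hy
          have hb : ∀ w ∈ S', (if h : w ∈ S' then y w h else 0) < dlv w := by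
            intro w hw
            have hm := hy' w hw
            simp only [hE, Finset.mem_filter, Finset.mem_range] at hm
            rw [dif_pos hw]
            exact hm.1
          have heq : ((Finset.univ.filter fun i : Fin r => ∀ w ∈ S', A i w ∈ E w).filter
                (fun i => (fun w (_ : w ∈ S') => A i w) = y))
              = Finset.univ.filter fun i : Fin r =>
                  ∀ w ∈ S', A i w = if h : w ∈ S' then y w h else 0 := by
            ext i
            simp only [Finset.mem_filter, Finset.mem_univ, true_and]
            constructor
            · rintro ⟨-, hfy⟩ w hw
              rw [dif_pos hw, ← hfy]
            · intro hyv
              have hval : ∀ w (hw : w ∈ S'), A i w = y w hw := by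
                intro w hw
                have h2 := hyv w hw
                rwa [dif_pos hw] at h2
              refine ⟨fun w hw => ?_, ?_⟩
              · rw [hval w hw]
                exact hy' w hw
              · funext w hw
                exact hval w hw
          rw [heq]
          have h2 := hA.2 S' hS'k (fun w => if h : w ∈ S' then y w h else 0) hb
          rw [Fintype.card_fin] at h2
          convert h2 using 3
          ext a
          simp only [Finset.mem_filter]
        calc (∑ y ∈ S'.pi fun w => E w,
                ((Finset.univ.filter fun i : Fin r => ∀ w ∈ S', A i w ∈ E w).filter
                  (fun i => (fun w (_ : w ∈ S') => A i w) = y)).card * ∏ w ∈ S', dlv w)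
            = ∑ _y ∈ S'.pi fun w => E w, r := Finset.sum_congr rfl hfib
          _ = (S'.pi fun w => E w).card * r := by rw [Finset.sum_const, smul_eq_mul]
          _ = (∏ w ∈ S', (E w).card) * r := by rw [Finset.card_pi]
      have hQ : ∏ w ∈ S', (∏ j ∈ S.filter fun j => colW j = w, lv j) = ∏ j ∈ S, lv j :=
        Finset.prod_fiberwise_of_maps_to (fun j hj => Finset.mem_image_of_mem _ hj) lv
      have hPQ : (∏ w ∈ S', (E w).card) * ∏ j ∈ S, lv j = ∏ w ∈ S', dlv w := by
        rw [← hQ, ← Finset.prod_mul_distrib]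
        exact Finset.prod_congr rfl hEprod
      have hDpos : 0 < ∏ w ∈ S', dlv w := Finset.prod_pos fun w _ => dpos w
      have hPpos : 0 < ∏ w ∈ S', (E w).card := by
        rcases Nat.eq_zero_or_pos (∏ w ∈ S', (E w).card) with h0 | hpos
        · rw [h0, zero_mul] at hPQ
          omega
        · exact hpos
      rw [Fintype.card_fin, hfilter]
      refine Nat.eq_of_mul_eq_mul_right hPpos ?_
      calc (Finset.univ.filter fun i : Fin r => ∀ w ∈ S', A i w ∈ E w).card
              * (∏ j ∈ S, lv j) * ∏ w ∈ S', (E w).card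
          = (Finset.univ.filter fun i : Fin r => ∀ w ∈ S', A i w ∈ E w).card
              * ((∏ w ∈ S', (E w).card) * ∏ j ∈ S, lv j) := by ring
        _ = (Finset.univ.filter fun i : Fin r => ∀ w ∈ S', A i w ∈ E w).card
              * ∏ w ∈ S', dlv w := by rw [hPQ]
        _ = (∏ w ∈ S', (E w).card) * r := hM
        _ = r * ∏ w ∈ S', (E w).card := mul_comm _ _
  · -- minimum distance part
    intro i i' hii
    show k + 1 ≤ (Finset.univ.filter fun j => C i j ≠ C i' j).card
    have hD0 : k + 1 ≤ (Finset.univ.filter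
        fun j : {j : Fin N // s ≤ j.val} => A i j.1 ≠ A i' j.1).card :=
      le_trans hsub (Nat.sInf_le ⟨i, i', hii, rfl⟩)
    have key : ∀ j0 : {j : Fin N // s ≤ j.val}, A i j0.1 ≠ A i' j0.1 →
        ∃ jc : ((Σ w : Fin N, {c : Fin (m w) // c ∈ T w}) ⊕ {w : Fin N // keep w = true}),
          colW jc = j0.1 ∧ C i jc ≠ C i' jc := by
      intro j0 hne
      cases hkt : keep j0.1 with
      | true =>
        refine ⟨Sum.inr ⟨j0.1, hkt⟩, rfl, ?_⟩
        rw [hCval, hCval]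
        exact hne
      | false =>
        have hT : T j0.1 = Finset.univ := by
          rcases hhigh j0.1 j0.2 with ⟨h1, _⟩ | ⟨_, h2⟩
          · rw [hkt] at h1; exact absurd h1 (by simp)
          · exact h2
        have h1 : 1 ≤ hamDist (fun a : Fin (dlv j0.1) => B j0.1 a.val)
            ⟨A i j0.1, hA.1 i j0.1⟩ ⟨A i' j0.1, hA.1 i' j0.1⟩ :=
          le_trans (hBMD j0.1 j0.2 hkt)
            (Nat.sInf_le ⟨_, _, fun hcon => hne (congrArg Fin.val hcon), rfl⟩)
        obtain ⟨c, hc⟩ := Finset.card_pos.mp h1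
        have hcne : B j0.1 (A i j0.1) c ≠ B j0.1 (A i' j0.1) c := (Finset.mem_filter.1 hc).2
        refine ⟨Sum.inl ⟨j0.1, ⟨c, by rw [hT]; exact Finset.mem_univ c⟩⟩, rfl, ?_⟩
        rw [hCval, hCval]
        exact hcne
    set D0 : Finset {j : Fin N // s ≤ j.val} :=
      Finset.univ.filter fun j : {j : Fin N // s ≤ j.val} => A i j.1 ≠ A i' j.1 with hD0def
    have key' : ∀ p : {j0 : {j : Fin N // s ≤ j.val} // j0 ∈ D0},
        ∃ jc, colW jc = p.1.1 ∧ C i jc ≠ C i' jc := by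
      intro p
      exact key p.1 (Finset.mem_filter.1 p.2).2
    choose g hg1 hg2 using key'
    calc k + 1 ≤ D0.card := hD0
      _ = (Finset.univ : Finset {j0 // j0 ∈ D0}).card := by
          rw [Finset.card_univ, Fintype.card_coe]
      _ ≤ (Finset.univ.filter fun jc => C i jc ≠ C i' jc).card := by
          refine Finset.card_le_card_of_injOn g ?_ ?_
          · intro p _
            exact Finset.mem_filter.2 ⟨Finset.mem_univ _, hg2 p⟩
          · intro p _ q _ hpq
            have h1 : p.1.1 = q.1.1 := by rw [← hg1 p, ← hg1 q, hpq]
            exact Subtype.ext (Subtype.ext h1)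
end

section
/- Let A be an orthogonal array OA(r, N, d, k) such that some N − s of its columns form a subarray with minimum Hamming distance MD ≥ k+1, and for each w = 1,…,t let B_w be a mixed orthogonal array of strength k with d rows and m_w columns of alphabet sizes d_{1w},…,d_{m_w w}. Then for all nonnegative integers n₁,…,n_t with 1 ≤ n₁+⋯+n_t ≤ s and all nonnegative integers v_{iw} (1 ≤ w ≤ t, 1 ≤ i ≤ m_w) with v_{iw} ≤ n_w and Σ_{j=1}^{t}Σ_{i=1}^{m_j} v_{ij} ≥ 1, there exists an irredundant mixed orthogonal array IrMOA(r, N − s + Σ_{j=1}^{t}Σ_{i=1}^{m_j} v_{ij}, d^{N−s}d_{11}^{v_{11}}⋯d_{m₁1}^{v_{m₁1}}⋯d_{1t}^{v_{1t}}⋯d_{m_t t}^{v_{m_t t}}, k). -/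
open Finset

/-! The array is built by expansive replacement. Copy the `N − s` columns of `A` in `S`, and
choose `n₁ + ⋯ + n_t ≤ s` further columns of `A` outside `S`, `n_w` of them for each `w`; replace
each of the latter, with symbol `y`, by the row `y` of `B_w`. Replacing every column of an
orthogonal array of strength `k` by an orthogonal array of strength `k` with as many rows as the
column has levels gives again strength `k` (count the rows of `A` lying in a box of symbols), and
deleting columns keeps strength `k`; keeping column `i` of `B_w` in only `v_{iw} ≤ n_w` of the
copies gives the required levels. Irredundancy comes from the copied columns of `S` alone. -/

namespace IsMOA

variable {ι κ : Type*} [Fintype ι] [Fintype κ] [DecidableEq κ] {A : ι → κ → ℕ} {lv : κ → ℕ}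
  {k : ℕ}

theorem comp_injective (hA : IsMOA A lv k) {κ' : Type*} [Fintype κ'] [DecidableEq κ']
    {ψ : κ' → κ} (hψ : ψ.Injective) : IsMOA (fun i j => A i (ψ j)) (fun j => lv (ψ j)) k := by
  refine ⟨fun i j => hA.1 i (ψ j), fun T hT x hx => ?_⟩
  have hx' : ∀ j, Function.extend ψ x 0 (ψ j) = x j := hψ.extend_apply x 0
  have := hA.2 (T.map ⟨ψ, hψ⟩) (by simpa using hT) (Function.extend ψ x 0) (by simpa [hx'] using hx)
  simpa [prod_map, hx'] using this

theorem card_filter_mul_prod_eq (hA : IsMOA A lv k) {P : Finset κ} (hP : #P ≤ k)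
    (Q : (c : κ) → Fin (lv c) → Prop) [∀ c, DecidablePred (Q c)] :
    #{i | ∀ c ∈ P, Q c ⟨A i c, hA.1 i c⟩} * ∏ c ∈ P, lv c
      = Fintype.card ι * ∏ c ∈ P, #{y | Q c y} := by
  let box := P.pi fun c => ({y | Q c y} : Finset (Fin (lv c)))
  let f : ι → (c : κ) → c ∈ P → Fin (lv c) := fun i c _ => ⟨A i c, hA.1 i c⟩
  have hf : Set.MapsTo f ({i | ∀ c ∈ P, Q c ⟨A i c, hA.1 i c⟩} : Finset ι) box := by
    intro i hi
    simpa [box, f, mem_pi] using hi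
  have hfiber : ∀ y ∈ box, #{i ∈ {i | ∀ c ∈ P, Q c ⟨A i c, hA.1 i c⟩} | f i = y}
      * ∏ c ∈ P, lv c = Fintype.card ι := by
    intro y hy
    convert hA.2 P hP (fun c => if h : c ∈ P then y c h else 0) (fun c hc => by simp [hc]) using 3
    ext i
    simp only [box, mem_pi, mem_filter, mem_univ, true_and] at hy ⊢
    constructor
    · rintro ⟨-, rfl⟩ c hc
      simp [f, hc]
    · intro h
      have hfy : f i = y := by
        funext c hc
        simpa [f, hc, Fin.ext_iff] using h c hc
      exact ⟨fun c hc => by simpa [← hfy] using hy c hc, hfy⟩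
  rw [card_eq_sum_card_fiberwise hf, sum_mul, sum_congr rfl hfiber, sum_const, card_pi,
    smul_eq_mul, mul_comm]

theorem sigma {τ : κ → Type*} [∀ c, Fintype (τ c)] [∀ c, DecidableEq (τ c)]
    (hA : IsMOA A lv k) (R : (c : κ) → ℕ → τ c → ℕ) (lvR : (c : κ) → τ c → ℕ)
    (hR : ∀ c, IsMOA (fun y : Fin (lv c) => R c y) (lvR c) k) :
    IsMOA (fun i (p : Σ c, τ c) => R p.1 (A i p.1) p.2) (fun p => lvR p.1 p.2) k := by
  refine ⟨fun i p => (hR p.1).1 ⟨A i p.1, hA.1 i p.1⟩ p.2, fun T hT x hx => ?_⟩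
  let P := T.image Sigma.fst
  let Tc : (c : κ) → Finset (τ c) := fun c => T.preimage (Sigma.mk c) sigma_mk_injective.injOn
  have hTc : ∀ c, #(Tc c) ≤ k := fun c =>
    (card_le_card_of_injOn (Sigma.mk c) (fun j hj => by simpa [Tc] using hj)
      sigma_mk_injective.injOn).trans hT
  have hrows := hA.card_filter_mul_prod_eq (P := P) (card_image_le.trans hT)
    (fun c y => ∀ j ∈ Tc c, R c y j = x ⟨c, j⟩)
  have hcols : ∀ c, #{y : Fin (lv c) | ∀ j ∈ Tc c, R c y j = x ⟨c, j⟩} * ∏ j ∈ Tc c, lvR c j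
      = lv c := fun c => by
    simpa using (hR c).2 (Tc c) (hTc c) (fun j => x ⟨c, j⟩)
      (fun j hj => hx _ (by simpa [Tc] using hj))
  rcases isEmpty_or_nonempty ι with _ | ⟨⟨i₀⟩⟩
  · simp
  have hpos : 0 < ∏ c ∈ P, lv c := prod_pos fun c _ => Nat.zero_lt_of_lt (hA.1 i₀ c)
  apply Nat.eq_of_mul_eq_mul_right hpos
  calc _ = (#{i | ∀ c ∈ P, ∀ j ∈ Tc c, R c (A i c) j = x ⟨c, j⟩} * ∏ c ∈ P, lv c)
          * ∏ c ∈ P, ∏ j ∈ Tc c, lvR c j := by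
        have hprod : ∏ p ∈ T, lvR p.1 p.2 = ∏ c ∈ P, ∏ j ∈ Tc c, lvR c j := by
          conv_lhs => rw [← sigma_image_fst_preimage_mk T]
          exact prod_sigma _ _ _
        have hfilter : #{i | ∀ p ∈ T, R p.1 (A i p.1) p.2 = x p}
            = #{i | ∀ c ∈ P, ∀ j ∈ Tc c, R c (A i c) j = x ⟨c, j⟩} := by
          congr 1
          ext i
          simpa [P, Tc] using ⟨fun h c _ _ j hj => h ⟨c, j⟩ hj, fun h p hp => h p.1 p.2 hp p.2 hp⟩
        rw [hprod, hfilter]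
        ring
    _ = Fintype.card ι * ∏ c ∈ P, lv c := by
        rw [hrows, mul_assoc, ← prod_mul_distrib, prod_congr rfl fun c _ => hcols c]

end IsMOA

theorem isMOA_fin_val {κ : Type*} [Fintype κ] [DecidableEq κ] [Subsingleton κ] (d k : ℕ) :
    IsMOA (fun (y : Fin d) (_ : κ) => (y : ℕ)) (fun _ => d) k := by
  refine ⟨fun y _ => y.2, fun T _ x hx => ?_⟩
  rcases T.eq_empty_or_nonempty with rfl | ⟨j, hj⟩
  · simp
  · obtain rfl : T = {j} := eq_singleton_iff_unique_mem.2 ⟨hj, fun _ _ => Subsingleton.elim _ _⟩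
    have : #{y : Fin d | (y : ℕ) = x j} = 1 :=
      card_eq_one.2 ⟨⟨x j, hx j (mem_singleton_self j)⟩, by ext; simp [Fin.ext_iff]⟩
    simp [this]

theorem minDist_comp_le_hamDist {ι κ κ' : Type*} [Fintype κ] [Fintype κ'] {C : ι → κ → ℕ}
    {ψ : κ' → κ} (hψ : ψ.Injective) {i i' : ι} (h : i ≠ i') :
    minDist (fun i j => C i (ψ j)) ≤ hamDist C i i' :=
  calc minDist (fun i j => C i (ψ j)) ≤ hamDist (fun i j => C i (ψ j)) i i' :=
        Nat.sInf_le ⟨i, i', h, rfl⟩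
    _ ≤ hamDist C i i' := card_le_card_of_injOn ψ (fun j hj => by simpa using hj) hψ.injOn

theorem Sigma.injective_castLE {ω : Type*} {m n : ω → ℕ} {v : (w : ω) → Fin (m w) → ℕ}
    (hv : ∀ w i, v w i ≤ n w) :
    Function.Injective fun q : Σ w, Σ i, Fin (v w i) =>
      (⟨⟨q.1, Fin.castLE (hv _ _) q.2.2⟩, q.2.1⟩ : Σ p : Σ w, Fin (n w), Fin (m p.1)) := by
  rintro ⟨w, i, j⟩ ⟨w', i', j'⟩ h
  obtain ⟨h₁, h₂⟩ := Sigma.mk.inj_iff.1 h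
  obtain ⟨rfl, h₃⟩ := Sigma.mk.inj_iff.1 h₁
  obtain rfl : i = i' := eq_of_heq h₂
  obtain rfl : j = j' := Fin.castLE_injective _ (eq_of_heq h₃)
  rfl

theorem statement13_general {r N d k s t : ℕ} (hs : s ≤ N)
    (A : Fin r → Fin N → ℕ) (hA : IsMOA A (fun _ => d) k)
    (S : Finset (Fin N)) (hScard : S.card = N - s)
    (hSMD : k + 1 ≤ minDist (fun i (j : S) => A i j.1))
    (m : Fin t → ℕ)
    (B : (w : Fin t) → ℕ → Fin (m w) → ℕ)
    (Blv : (w : Fin t) → Fin (m w) → ℕ)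
    (hB : ∀ w, IsMOA (fun a : Fin d => B w a.val) (Blv w) k)
    (n : Fin t → ℕ) (hns : ∑ w, n w ≤ s)
    (v : (w : Fin t) → Fin (m w) → ℕ)
    (hv : ∀ w i, v w i ≤ n w) :
    ∃ C : Fin r → (Fin (N - s) ⊕ (Σ w : Fin t, Σ i : Fin (m w), Fin (v w i))) → ℕ,
      IsIrMOA C (Sum.elim (fun _ => d) fun p => Blv p.1 p.2.1) k := by
  let e := S.orderIsoOfFin hScard
  obtain ⟨F⟩ : Nonempty ((Σ w, Fin (n w)) ↪ {j // j ∉ S}) :=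
    Function.Embedding.nonempty_of_card_le (by simp [Fintype.card_subtype_compl, hScard]; omega)
  let χ := Equiv.sumCompl (· ∈ S) ∘ Sum.map e F
  have hχ : χ.Injective := (Equiv.injective _).comp (e.injective.sumMap F.injective)
  let cols : Fin (N - s) ⊕ (Σ w, Fin (n w)) → ℕ := Sum.elim (fun _ => 1) (fun p => m p.1)
  let R : (c : Fin (N - s) ⊕ (Σ w, Fin (n w))) → ℕ → Fin (cols c) → ℕ :=
    Sum.rec (fun _ y _ => y) (fun p => B p.1)
  let lvR : (c : Fin (N - s) ⊕ (Σ w, Fin (n w))) → Fin (cols c) → ℕ :=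
    Sum.rec (fun _ _ => d) (fun p => Blv p.1)
  have hR : ∀ c, IsMOA (fun y : Fin d => R c y) (lvR c) k := by
    rintro (a | p)
    · exact isMOA_fin_val (κ := Fin 1) d k
    · exact hB p.1
  have hbig := (hA.comp_injective hχ).sigma R lvR hR
  let ψ : Fin (N - s) ⊕ (Σ w i, Fin (v w i)) → Σ c, Fin (cols c) :=
    (Equiv.sumSigmaDistrib _).symm ∘
      Sum.map (fun a => (⟨a, 0⟩ : Σ _ : Fin (N - s), Fin 1)) fun q =>
      (⟨⟨q.1, Fin.castLE (hv _ _) q.2.2⟩, q.2.1⟩ : Σ p : Σ w, Fin (n w), Fin (m p.1))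
  have hψ : ψ.Injective := (Equiv.injective _).comp
    (Function.Injective.sumMap (fun _ _ h => congrArg Sigma.fst h) (Sigma.injective_castLE hv))
  let C i j := R (ψ j).1 (A i (χ (ψ j).1)) (ψ j).2
  refine ⟨C, ?_, fun i i' hii' => hSMD.trans ?_⟩
  · convert hbig.comp_injective hψ using 1
    funext j
    rcases j with a | q <;> rfl
  · have hS : (fun i (j : S) => A i j.1) = fun i j => C i (.inl (e.symm j)) := by
      funext i j
      exact congrArg (A i ∘ Subtype.val) (e.apply_symm_apply j).symm
    rw [hS]
    exact minDist_comp_le_hamDist (Sum.inl_injective.comp e.symm.injective) hii'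

/-- Let `A = OA(r, N, d, k)` such that some `N − s` of its
columns (a set `S`) form a subarray with minimum Hamming distance `≥ k+1`, and
for `w = 1,…,t` let `B w` be an MOA of strength `k` with `d` rows, `m w`
columns and levels `Blv w`. Then for all `n₁,…,n_t ≥ 0` with
`1 ≤ n₁+⋯+n_t ≤ s` and all `v_{iw} ≤ n_w` with `Σ v_{iw} ≥ 1` there is an
irredundant MOA of strength `k` with `r` rows, `N − s` columns of `d` levels
and, for each `w, i`, exactly `v w i` columns of `Blv w i` levels. -/
theorem statement13 {r N d k s t : ℕ} (hs : s ≤ N)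
    (A : Fin r → Fin N → ℕ) (hA : IsMOA A (fun _ => d) k)
    (S : Finset (Fin N)) (hScard : S.card = N - s)
    (hSMD : k + 1 ≤ minDist (fun i (j : S) => A i j.1))
    (m : Fin t → ℕ)
    (B : (w : Fin t) → ℕ → Fin (m w) → ℕ)
    (Blv : (w : Fin t) → Fin (m w) → ℕ)
    (hB : ∀ w, IsMOA (fun a : Fin d => B w a.val) (Blv w) k)
    (n : Fin t → ℕ) (hn1 : 1 ≤ ∑ w, n w) (hns : ∑ w, n w ≤ s)
    (v : (w : Fin t) → Fin (m w) → ℕ)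
    (hv : ∀ w i, v w i ≤ n w)
    (hv1 : 1 ≤ ∑ w, ∑ i, v w i) :
    ∃ C : Fin r → (Fin (N - s) ⊕ (Σ w : Fin t, Σ i : Fin (m w), Fin (v w i))) → ℕ,
      IsIrMOA C (Sum.elim (fun _ => d) fun p => Blv p.1 p.2.1) k :=
  statement13_general hs A hA S hScard hSMD m B Blv hB n hns v hv
end
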